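/- arXiv:2005.04294 — 9 statements merged into one kernel-verified Lean document; each statement's English description precedes it below -/
import Mathlib

section
/- If g is continuously differentiable on some half-line [x₀,∞) with g(x) ≠ 0 and g'(x)/g(x) having limit structure x·g'(x)/g(x) → α as x → ∞, then for every ε > 0 one eventually has x^(α-ε) ≤ C·|g(x)| for some constant C > 0; in particular if α > 0 then |g(x)| → ∞. -/
/-!
The lower bound `α - ε ≤ x g'(x) / g(x)` for large `x` says exactly that
`F x = log |g x| - (α - ε) log x` has nonnegative derivative, so `F` is nondecreasing from some
point `a` on; exponentiating `F a ≤ F x` gives `x ^ (α - ε) ≤ e^{-F a} |g x|`.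
For `α > 0`, taking `ε = α / 2` makes `|g x|` dominate `x ^ (α / 2) → ∞`.
-/

open Filter Set

lemma monotoneOn_log_sub_mul_log {g : ℝ → ℝ} {a β : ℝ} (ha : 0 < a)
    (hd : ∀ x ∈ Ici a, DifferentiableAt ℝ g x) (hne : ∀ x ∈ Ici a, g x ≠ 0)
    (hlow : ∀ x ∈ Ici a, β ≤ x * deriv g x / g x) :
    MonotoneOn (fun x => Real.log (g x) - β * Real.log x) (Ici a) := by
  have hderiv : ∀ x ∈ Ici a, HasDerivAt (fun x => Real.log (g x) - β * Real.log x)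
      (deriv g x / g x - β * x⁻¹) x := fun x hx =>
    ((hd x hx).hasDerivAt.log (hne x hx)).sub
      ((Real.hasDerivAt_log (lt_of_lt_of_le ha hx).ne').const_mul β)
  refine monotoneOn_of_hasDerivWithinAt_nonneg (convex_Ici a)
    (fun x hx => (hderiv x hx).continuousAt.continuousWithinAt)
    (fun x hx => (hderiv x (interior_subset hx)).hasDerivWithinAt) fun x hx => ?_
  have hx : x ∈ Ici a := interior_subset hx
  have hxpos : 0 < x := lt_of_lt_of_le ha hx
  have hquot : β / x ≤ deriv g x / g x := by
    rw [div_le_iff₀' hxpos, ← mul_div_assoc]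
    exact hlow x hx
  rw [← div_eq_mul_inv]
  linarith

lemma exists_rpow_le_mul_abs {g : ℝ → ℝ} {β : ℝ}
    (hd : ∀ᶠ x in atTop, DifferentiableAt ℝ g x) (hne : ∀ᶠ x in atTop, g x ≠ 0)
    (hlow : ∀ᶠ x in atTop, β ≤ x * deriv g x / g x) :
    ∃ C > 0, ∀ᶠ x in atTop, x ^ β ≤ C * |g x| := by
  obtain ⟨a, ha⟩ := eventually_atTop.mp ((hd.and hne).and (hlow.and (eventually_ge_atTop 1)))
  have hapos : 0 < a := zero_lt_one.trans_le (ha a le_rfl).2.2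
  set F := fun x => Real.log (g x) - β * Real.log x
  have hmono : MonotoneOn F (Ici a) :=
    monotoneOn_log_sub_mul_log hapos (fun x hx => (ha x hx).1.1) (fun x hx => (ha x hx).1.2)
      fun x hx => (ha x hx).2.1
  refine ⟨Real.exp (-F a), Real.exp_pos _, ?_⟩
  filter_upwards [eventually_ge_atTop a] with x hx
  have hxpos : 0 < x := hapos.trans_le hx
  have hFx : F a ≤ Real.log |g x| - β * Real.log x := by
    rw [Real.log_abs]
    exact hmono self_mem_Ici hx hx
  calc x ^ β = Real.exp (β * Real.log x) := by rw [Real.rpow_def_of_pos hxpos, mul_comm]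
    _ ≤ Real.exp (-F a + Real.log |g x|) := Real.exp_le_exp.mpr (by linarith)
    _ = Real.exp (-F a) * |g x| := by
      rw [Real.exp_add, Real.exp_log (abs_pos.mpr (ha x hx).1.2)]

theorem stmt0_general (g : ℝ → ℝ) (x₀ α : ℝ)
    (hg : ContDiffOn ℝ 1 g (Ici x₀))
    (hne : ∀ x ∈ Ici x₀, g x ≠ 0)
    (hlim : Tendsto (fun x => x * deriv g x / g x) atTop (nhds α)) :
    (∀ ε > 0, ∃ C > 0, ∀ᶠ x in atTop, x ^ (α - ε) ≤ C * |g x|) ∧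
      (0 < α → Tendsto (fun x => |g x|) atTop atTop) := by
  have hd : ∀ᶠ x in atTop, DifferentiableAt ℝ g x := by
    filter_upwards [eventually_gt_atTop x₀] with x hx
    exact (hg.differentiableOn one_ne_zero).differentiableAt (Ici_mem_nhds hx)
  have hne' : ∀ᶠ x in atTop, g x ≠ 0 := by
    filter_upwards [eventually_ge_atTop x₀] with x hx using hne x hx
  have hbound : ∀ ε > 0, ∃ C > 0, ∀ᶠ x in atTop, x ^ (α - ε) ≤ C * |g x| := fun ε hε =>
    exists_rpow_le_mul_abs hd hne' (hlim.eventually (eventually_ge_nhds (by linarith)))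
  refine ⟨hbound, fun hα => ?_⟩
  obtain ⟨C, hC, hev⟩ := hbound (α / 2) (half_pos hα)
  refine tendsto_atTop_mono' atTop ?_
    ((tendsto_rpow_atTop (half_pos hα)).atTop_div_const hC)
  filter_upwards [hev] with x hx
  rw [div_le_iff₀ hC, mul_comm, ← sub_half]
  exact hx

/-- If `g` is C¹ on `[x₀, ∞)` with `g` nonvanishing there and
`x * g'(x) / g(x) → α` as `x → ∞`, then for every `ε > 0`, eventually
`x ^ (α - ε) ≤ C * |g x|` for some constant `C > 0`; in particular if
`α > 0` then `|g x| → ∞`. -/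
theorem stmt0 (g : ℝ → ℝ) (x₀ α : ℝ) (hx₀ : 0 < x₀)
    (hg : ContDiffOn ℝ 1 g (Ici x₀))
    (hne : ∀ x ∈ Ici x₀, g x ≠ 0)
    (hlim : Tendsto (fun x => x * deriv g x / g x) atTop (nhds α)) :
    (∀ ε > 0, ∃ C > 0, ∀ᶠ x in atTop, x ^ (α - ε) ≤ C * |g x|) ∧
      (0 < α → Tendsto (fun x => |g x|) atTop atTop) :=
  stmt0_general g x₀ α hg hne hlim
end

section
/- If g is continuously differentiable on some half-line, g(x) ≠ 0 eventually, and lim_{x→∞} x·g'(x)/g(x) = α with α < β, then eventually |g(x)| ≤ C·x^β for some constant C > 0. -/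
open Filter Set

/-! Once `x g'(x)/g(x) ≤ β` on `[X, ∞)`, the function `log |g x| - β log x`, whose derivative is
`(x g'(x)/g(x) - β)/x`, is antitone there; exponentiating, `|g x| / x ^ β ≤ |g X| / X ^ β`. -/

theorem antitoneOn_log_sub_mul_log {g : ℝ → ℝ} {X β : ℝ} (hX : 0 < X)
    (hd : ∀ x ∈ Ici X, DifferentiableAt ℝ g x) (hne : ∀ x ∈ Ici X, g x ≠ 0)
    (hβ : ∀ x ∈ Ici X, x * deriv g x / g x ≤ β) :
    AntitoneOn (fun x => Real.log (g x) - β * Real.log x) (Ici X) := by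
  have hderiv : ∀ x ∈ Ici X, HasDerivAt (fun x => Real.log (g x) - β * Real.log x)
      ((x * deriv g x / g x - β) / x) x := by
    intro x hx
    have hx0 : x ≠ 0 := (hX.trans_le hx).ne'
    refine (((hd x hx).hasDerivAt.log (hne x hx)).sub
      ((Real.hasDerivAt_log hx0).const_mul β)).congr_deriv ?_
    field_simp
  refine antitoneOn_of_hasDerivWithinAt_nonpos (convex_Ici X)
    (fun x hx => (hderiv x hx).continuousAt.continuousWithinAt)
    (fun x hx => (hderiv x (interior_subset hx)).hasDerivWithinAt) fun x hx => ?_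
  have hx : x ∈ Ici X := interior_subset hx
  exact div_nonpos_of_nonpos_of_nonneg (sub_nonpos.2 (hβ x hx)) (hX.le.trans hx)

theorem exp_log_sub_mul_log {y x β : ℝ} (hy : y ≠ 0) (hx : 0 < x) :
    Real.exp (Real.log y - β * Real.log x) = |y| / x ^ β := by
  rw [Real.exp_sub, ← Real.log_abs, Real.exp_log (abs_pos.2 hy), mul_comm,
    Real.rpow_def_of_pos hx]

theorem abs_le_mul_rpow_of_mul_deriv_div_le {g : ℝ → ℝ} {X β : ℝ} (hX : 0 < X)
    (hd : ∀ x ∈ Ici X, DifferentiableAt ℝ g x) (hne : ∀ x ∈ Ici X, g x ≠ 0)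
    (hβ : ∀ x ∈ Ici X, x * deriv g x / g x ≤ β) {x : ℝ} (hx : X ≤ x) :
    |g x| ≤ |g X| / X ^ β * x ^ β := by
  have hx0 : 0 < x := hX.trans_le hx
  have hmono := antitoneOn_log_sub_mul_log hX hd hne hβ self_mem_Ici hx hx
  have hdiv : |g x| / x ^ β ≤ |g X| / X ^ β := by
    rw [← exp_log_sub_mul_log (hne x hx) hx0, ← exp_log_sub_mul_log (hne X self_mem_Ici) hX]
    exact Real.exp_le_exp.2 hmono
  rwa [div_le_iff₀ (Real.rpow_pos_of_pos hx0 β)] at hdiv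

theorem stmt1_general (g : ℝ → ℝ) (x₀ α β : ℝ)
    (hg : ContDiffOn ℝ 1 g (Ici x₀))
    (hne : ∀ x ∈ Ici x₀, g x ≠ 0)
    (hlim : Tendsto (fun x => x * deriv g x / g x) atTop (nhds α))
    (hαβ : α < β) :
    ∃ C > 0, ∀ᶠ x in atTop, |g x| ≤ C * x ^ β := by
  obtain ⟨X, hX⟩ := eventually_atTop.1 <|
    ((hlim.eventually (eventually_le_nhds hαβ)).and (eventually_gt_atTop x₀)).and
      (eventually_gt_atTop 0)
  have hX₀ : x₀ < X := (hX X le_rfl).1.2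
  have hXpos : 0 < X := (hX X le_rfl).2
  have hd : ∀ x ∈ Ici X, DifferentiableAt ℝ g x := fun x hx =>
    (hg.differentiableOn one_ne_zero x (hX₀.trans_le hx).le).differentiableAt
      (Ici_mem_nhds (hX₀.trans_le hx))
  have hneX : ∀ x ∈ Ici X, g x ≠ 0 := fun x hx => hne x (hX₀.trans_le hx).le
  refine ⟨|g X| / X ^ β, div_pos (abs_pos.2 (hneX X self_mem_Ici)) (Real.rpow_pos_of_pos hXpos β),
    ?_⟩
  filter_upwards [eventually_ge_atTop X] with x hx
  exact abs_le_mul_rpow_of_mul_deriv_div_le hXpos hd hneX (fun y hy => (hX y hy).1.1) hx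

/-- If `g` is C¹ on `[x₀, ∞)`, nonvanishing there, and
`x * g'(x) / g(x) → α` with `α < β`, then eventually `|g x| ≤ C * x ^ β`
for some constant `C > 0`. -/
theorem stmt1 (g : ℝ → ℝ) (x₀ α β : ℝ) (hx₀ : 0 < x₀)
    (hg : ContDiffOn ℝ 1 g (Ici x₀))
    (hne : ∀ x ∈ Ici x₀, g x ≠ 0)
    (hlim : Tendsto (fun x => x * deriv g x / g x) atTop (nhds α))
    (hαβ : α < β) :
    ∃ C > 0, ∀ᶠ x in atTop, |g x| ≤ C * x ^ β :=
  stmt1_general g x₀ α β hg hne hlim hαβ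
end

section
/- Let g be C¹ on a half-line with lim_{x→∞} x·g'(x)/g(x) = L ∈ ℝ (and g nonvanishing). Then for every real h, lim_{x→∞} g(x+h)/g(x) = 1. -/
open Filter Set
open scoped Topology

/-! Since `g'/g = o(1)`, the mean value theorem applied to `log |g|` gives
`log |g(x + h)| - log |g(x)| → 0`; as `g` has constant sign on `[x₀, ∞)`, exponentiating
yields `g(x + h)/g(x) → 1`. -/

theorem IsPreconnected.div_pos_of_ne_zero {s : Set ℝ} {f : ℝ → ℝ} (hs : IsPreconnected s)
    (hf : ContinuousOn f s) (hf₀ : ∀ x ∈ s, f x ≠ 0) {a b : ℝ} (ha : a ∈ s) (hb : b ∈ s) :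
    0 < f b / f a := by
  by_contra! hnonpos
  obtain ⟨c, hc, hfc⟩ : ∃ c ∈ s, f c = 0 := by
    rcases div_nonpos_iff.mp hnonpos with ⟨hb₀, ha₀⟩ | ⟨hb₀, ha₀⟩
    · exact hs.intermediate_value₂ ha hb hf continuousOn_const ha₀ hb₀
    · exact hs.intermediate_value₂ hb ha hf continuousOn_const hb₀ ha₀
  exact hf₀ c hc hfc

theorem tendsto_zero_of_tendsto_id_mul {u : ℝ → ℝ} {L : ℝ}
    (hu : Tendsto (fun x => x * u x) atTop (𝓝 L)) : Tendsto u atTop (𝓝 0) := by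
  have := hu.mul tendsto_inv_atTop_zero
  rw [mul_zero] at this
  refine this.congr' ?_
  filter_upwards [eventually_ne_atTop 0] with x hx
  field_simp

theorem tendsto_sub_comp_add_of_hasDerivAt {E : Type*} [NormedAddCommGroup E] [NormedSpace ℝ E]
    {f f' : ℝ → E} (hf : ∀ᶠ x in atTop, HasDerivAt f (f' x) x)
    (hf' : Tendsto f' atTop (𝓝 0)) (h : ℝ) :
    Tendsto (fun x => f (x + h) - f x) atTop (𝓝 0) := by
  rw [NormedAddGroup.tendsto_nhds_zero]
  intro ε hε
  have hδ : 0 < ε / (|h| + 1) := by positivity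
  obtain ⟨M, hM⟩ := eventually_atTop.mp
    (hf.and (NormedAddGroup.tendsto_nhds_zero.mp hf' _ hδ))
  filter_upwards [eventually_ge_atTop (M + |h|)] with x hx
  have hx_mem : x ∈ Ici M := by simp only [mem_Ici]; linarith [abs_nonneg h]
  have hxh_mem : x + h ∈ Ici M := by simp only [mem_Ici]; linarith [neg_abs_le h]
  have hmvt := (convex_Ici M).norm_image_sub_le_of_norm_hasDerivWithin_le
    (fun y hy => (hM y hy).1.hasDerivWithinAt) (fun y hy => (hM y hy).2.le) hx_mem hxh_mem
  rw [add_sub_cancel_left, Real.norm_eq_abs] at hmvt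
  calc ‖f (x + h) - f x‖ ≤ ε / (|h| + 1) * |h| := hmvt
    _ < ε := by
      rw [div_mul_eq_mul_div, div_lt_iff₀ (by positivity)]
      nlinarith

/-- (Bergelson–Håland Knutson, Lemma 2.3) If `g` is C¹ on `[x₀, ∞)`, nonvanishing there,
and `x * g'(x) / g(x)` converges to a real number `L` as `x → ∞`, then for every real `h`,
`g (x + h) / g x → 1` as `x → ∞`. -/
theorem stmt2 (g : ℝ → ℝ) (x₀ L : ℝ)
    (hg : ContDiffOn ℝ 1 g (Ici x₀))
    (hne : ∀ x ∈ Ici x₀, g x ≠ 0)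
    (hlim : Tendsto (fun x => x * deriv g x / g x) atTop (nhds L)) :
    ∀ h : ℝ, Tendsto (fun x => g (x + h) / g x) atTop (nhds 1) := by
  intro h
  have hlog_deriv : ∀ᶠ x in atTop, HasDerivAt (fun x => Real.log (g x)) (deriv g x / g x) x := by
    filter_upwards [eventually_gt_atTop x₀] with x hx
    have hdiff := (hg.differentiableOn one_ne_zero).differentiableAt (Ici_mem_nhds hx)
    exact hdiff.hasDerivAt.log (hne x hx.le)
  have hlog_diff := tendsto_sub_comp_add_of_hasDerivAt hlog_deriv
    (tendsto_zero_of_tendsto_id_mul (by simpa only [mul_div_assoc] using hlim)) h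
  have hexp := (Real.continuous_exp.tendsto 0).comp hlog_diff
  rw [Real.exp_zero] at hexp
  refine hexp.congr' ?_
  filter_upwards [eventually_ge_atTop x₀, eventually_ge_atTop (x₀ - h)] with x hx hx_sub
  have hxh : x + h ∈ Ici x₀ := by simp only [mem_Ici]; linarith
  have hratio := isPreconnected_Ici.div_pos_of_ne_zero hg.continuousOn hne hx hxh
  simp only [Function.comp_apply]
  rw [← Real.log_div (hne _ hxh) (hne x hx), Real.exp_log hratio]
end

section
/- Let g₁ be smooth on a half-line with all derivatives nonvanishing and lim_{x→∞} x·g₁^(j+1)(x)/g₁^(j)(x) real for every j (i.e. g₁ ∈ 𝓡), and let g₂ be smooth with g₂(x)/g₁(x) → c for some c ≠ 0 and g₂'(x)/g₁'(x) convergent. Then lim_{x→∞} g₂'(x)/g₁'(x) = c, provided lim_{x→∞} x·g₁'(x)/g₁(x) = α ≠ 0 and lim_{x→∞} x·g₂'(x)/g₂(x) exists in ℝ. -/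
open Filter Set

/-- Let `g₁ ∈ 𝓡` (smooth, nonvanishing derivatives, all ratios `x g₁^(j+1)/g₁^(j)`
convergent), and `g₂` smooth with `g₂/g₁ → c ≠ 0` and `g₂'/g₁'` convergent. If moreover
`x g₁'/g₁ → α ≠ 0` and `x g₂'/g₂ → β ∈ ℝ`, then `g₂'/g₁' → c` and `β = α`. -/
theorem stmt5 (g₁ g₂ : ℝ → ℝ) (x₀ α β c : ℝ)
    (hg₁ : ContDiffOn ℝ (⊤ : ℕ∞) g₁ (Ici x₀)) (hg₂ : ContDiffOn ℝ (⊤ : ℕ∞) g₂ (Ici x₀))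
    (hne₁ : ∀ x ∈ Ici x₀, g₁ x ≠ 0) (hne₂ : ∀ x ∈ Ici x₀, g₂ x ≠ 0)
    (hne₁' : ∀ x ∈ Ici x₀, deriv g₁ x ≠ 0)
    (hRj : ∀ j : ℕ, ∃ L : ℝ, Tendsto
      (fun x => x * iteratedDeriv (j + 1) g₁ x / iteratedDeriv j g₁ x) atTop (nhds L))
    (hc : Tendsto (fun x => g₂ x / g₁ x) atTop (nhds c)) (hc0 : c ≠ 0)
    (hα : Tendsto (fun x => x * deriv g₁ x / g₁ x) atTop (nhds α)) (hα0 : α ≠ 0)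
    (hβ : Tendsto (fun x => x * deriv g₂ x / g₂ x) atTop (nhds β))
    (hconv : ∃ d : ℝ, Tendsto (fun x => deriv g₂ x / deriv g₁ x) atTop (nhds d)) :
    Tendsto (fun x => deriv g₂ x / deriv g₁ x) atTop (nhds c) ∧ β = α := by
  -- derivatives at points strictly beyond x₀
  have hd₁ : ∀ x, x₀ < x → HasDerivAt g₁ (deriv g₁ x) x := fun x hx =>
    (((hg₁.differentiableOn (by simp)).differentiableAt (Ici_mem_nhds hx))).hasDerivAt
  have hd₂ : ∀ x, x₀ < x → HasDerivAt g₂ (deriv g₂ x) x := fun x hx =>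
    (((hg₂.differentiableOn (by simp)).differentiableAt (Ici_mem_nhds hx))).hasDerivAt
  have hder : ∀ x, x₀ < x → HasDerivAt (fun y => Real.log (g₂ y / g₁ y))
      (deriv g₂ x / g₂ x - deriv g₁ x / g₁ x) x := by
    intro x hx
    have h1 := hne₁ x hx.le
    have h2 := hne₂ x hx.le
    have H := (((hd₂ x hx).div (hd₁ x hx) h1)).log (div_ne_zero h2 h1)
    convert H using 1
    · rfl
    rw [Pi.div_apply]
    field_simp
  have hβα : β = α := by
    by_contra hneq
    have hγ0 : β - α ≠ 0 := sub_ne_zero.mpr hneq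
    have hγ : Tendsto (fun x => x * deriv g₂ x / g₂ x - x * deriv g₁ x / g₁ x)
        atTop (nhds (β - α)) := hβ.sub hα
    have hφ : Tendsto (fun x => Real.log (g₂ x / g₁ x)) atTop (nhds (Real.log c)) :=
      (Real.continuousAt_log hc0).tendsto.comp hc
    have h2t : Tendsto (fun a : ℝ => 2 * a) atTop atTop :=
      Tendsto.const_mul_atTop two_pos tendsto_id
    have hdiff : Tendsto (fun a => Real.log (g₂ (2 * a) / g₁ (2 * a))
        - Real.log (g₂ a / g₁ a)) atTop (nhds 0) := by
      simpa using (hφ.comp h2t).sub hφ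
    have E1 : ∀ᶠ x in atTop,
        |x * deriv g₂ x / g₂ x - x * deriv g₁ x / g₁ x - (β - α)| < |β - α| / 2 := by
      have := Metric.tendsto_nhds.mp hγ (|β - α| / 2) (by positivity)
      filter_upwards [this] with x hx
      rwa [Real.dist_eq] at hx
    obtain ⟨a₁, hA1⟩ := eventually_atTop.mp E1
    have E2 : ∀ᶠ a in atTop,
        |Real.log (g₂ (2 * a) / g₁ (2 * a)) - Real.log (g₂ a / g₁ a)| < |β - α| / 4 := by
      have := Metric.tendsto_nhds.mp hdiff (|β - α| / 4) (by positivity)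
      simpa [Real.dist_eq] using this
    obtain ⟨a, ⟨hax₀, ha0, hE2⟩, haa₁⟩ :=
      (((eventually_gt_atTop x₀).and ((eventually_gt_atTop (0 : ℝ)).and E2)).and
        (eventually_ge_atTop a₁)).exists
    have hlt : a < 2 * a := by linarith
    obtain ⟨ξ, hξ, hξeq⟩ := exists_hasDerivAt_eq_slope
      (fun y => Real.log (g₂ y / g₁ y))
      (fun y => deriv g₂ y / g₂ y - deriv g₁ y / g₁ y) hlt
      (fun x hx => (hder x (lt_of_lt_of_le hax₀ hx.1)).continuousAt.continuousWithinAt)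
      (fun x hx => hder x (lt_trans hax₀ hx.1))
    set D : ℝ := Real.log (g₂ (2 * a) / g₁ (2 * a)) - Real.log (g₂ a / g₁ a) with hD
    have hξa : a < ξ := hξ.1
    have hξb : ξ < 2 * a := hξ.2
    have hξpos : 0 < ξ := lt_trans ha0 hξa
    have hP : deriv g₂ ξ / g₂ ξ - deriv g₁ ξ / g₁ ξ = D / a := by
      rw [hξeq]; congr 1; ring
    have hmul : ξ * deriv g₂ ξ / g₂ ξ - ξ * deriv g₁ ξ / g₁ ξ
        = ξ * (deriv g₂ ξ / g₂ ξ - deriv g₁ ξ / g₁ ξ) := by ring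
    have hb1 : |ξ * (D / a) - (β - α)| < |β - α| / 2 := by
      have := hA1 ξ (le_trans haa₁ hξa.le)
      rw [hmul, hP] at this
      exact this
    have hb2 : |ξ * (D / a)| < |β - α| / 2 := by
      have habs : |ξ * (D / a)| = ξ * |D| / a := by
        rw [abs_mul, abs_div, abs_of_pos hξpos, abs_of_pos ha0]; ring
      rw [habs, div_lt_iff₀ ha0]
      nlinarith [abs_nonneg D]
    have key : |β - α| ≤ |ξ * (D / a) - (β - α)| + |ξ * (D / a)| := by
      calc |β - α| = |((β - α) - ξ * (D / a)) + ξ * (D / a)| := by ring_nf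
        _ ≤ |(β - α) - ξ * (D / a)| + |ξ * (D / a)| := abs_add_le _ _
        _ = |ξ * (D / a) - (β - α)| + |ξ * (D / a)| := by rw [abs_sub_comm]
    linarith
  rw [hβα] at hβ
  have heq : ∀ᶠ x in atTop, (x * deriv g₂ x / g₂ x) * (g₂ x / g₁ x)
      / (x * deriv g₁ x / g₁ x) = deriv g₂ x / deriv g₁ x := by
    filter_upwards [eventually_gt_atTop x₀, eventually_gt_atTop (0 : ℝ)] with x hx hx0
    have h1 := hne₁ x hx.le
    have h2 := hne₂ x hx.le
    have h3 := hne₁' x hx.le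
    field_simp
  have hprod : Tendsto (fun x => (x * deriv g₂ x / g₂ x) * (g₂ x / g₁ x)
      / (x * deriv g₁ x / g₁ x)) atTop (nhds (α * c / α)) := (hβ.mul hc).div hα hα0
  have hval : α * c / α = c := by rw [mul_comm, mul_div_assoc, div_self hα0, mul_one]
  rw [hval] at hprod
  exact ⟨hprod.congr' heq, hβα⟩
end

section
/- (van der Corput inequality in Hilbert space) Let (uₙ) be a bounded sequence in a Hilbert space H. Then limsup_{N→∞} ‖(1/N)∑_{n=1}^N uₙ‖² ≤ 4·limsup_{H→∞} (1/H)∑_{h=1}^H limsup_{N→∞} |(1/N)∑_{n=1}^N ⟨uₙ, u_{n+h}⟩|. -/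
/-!
Replacing each `uₙ` by the window average `wₙ = (1/K) ∑_{k<K} u_{n+k}` changes the Cesàro mean
`(1/N) ∑ uₙ` by `O(K/N)`. By convexity, the squared norm of the mean of the `wₙ` is at most the
mean of `‖wₙ‖²`, which expands into the `K²` averaged inner products `⟨u_{n+k}, u_{n+l}⟩`. Up to
`O(K/N)` these are the correlations of lag `|k - l|`, and each lag occurs at most `2K` times, so
`limsup_N ‖(1/N) ∑ uₙ‖² ≤ 2 sup ‖uₙ‖² / K + (2/K) ∑_{h=1}^K γ(h)` with `γ(h)` the limsup of the
lag-`h` correlations. Letting `K → ∞` gives the inequality even with the constant `2`.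
-/

open Filter Finset Topology
open scoped InnerProductSpace

lemma sum_Icc_one_eq_sum_range {M : Type*} [AddCommMonoid M] (f : ℕ → M) (N : ℕ) :
    ∑ n ∈ Icc 1 N, f n = ∑ n ∈ range N, f (n + 1) := by
  rw [← Ico_add_one_right_eq_Icc, sum_Ico_eq_sum_range, Nat.add_sub_cancel]
  simp only [add_comm]

lemma sum_range_le_add_sum_Icc {F : ℕ → ℝ} (hF : ∀ h, 0 ≤ F h) (K : ℕ) :
    ∑ h ∈ range K, F h ≤ F 0 + ∑ h ∈ Icc 1 K, F h := by
  calc ∑ h ∈ range K, F h ≤ ∑ h ∈ range (K + 1), F h :=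
        sum_le_sum_of_subset_of_nonneg (range_subset_range.2 K.le_succ) fun h _ _ => hF h
    _ = F 0 + ∑ h ∈ Icc 1 K, F h := by rw [sum_range_succ', sum_Icc_one_eq_sum_range, add_comm]

-- `k - l + (l - k)` is `|k - l|` in truncated subtraction.
lemma sum_range_sum_range_dist_le {F : ℕ → ℝ} (hF : ∀ h, 0 ≤ F h) (K : ℕ) :
    ∑ k ∈ range K, ∑ l ∈ range K, F (k - l + (l - k)) ≤ 2 * K * ∑ h ∈ range K, F h := by
  have row : ∀ k ∈ range K, ∑ l ∈ range K, F (k - l + (l - k)) ≤ 2 * ∑ h ∈ range K, F h := by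
    intro k hk
    have hkK : k + 1 ≤ K := mem_range.1 hk
    have below : ∑ l ∈ range (k + 1), F (k - l + (l - k)) ≤ ∑ h ∈ range K, F h :=
      calc ∑ l ∈ range (k + 1), F (k - l + (l - k)) = ∑ l ∈ range (k + 1), F (k + 1 - 1 - l) :=
            sum_congr rfl fun l hl => by rw [mem_range] at hl; congr 1; omega
        _ = ∑ h ∈ range (k + 1), F h := sum_range_reflect F (k + 1)
        _ ≤ ∑ h ∈ range K, F h :=
            sum_le_sum_of_subset_of_nonneg (range_subset_range.2 hkK) fun h _ _ => hF h
    have above : ∑ l ∈ Ico (k + 1) K, F (k - l + (l - k)) ≤ ∑ h ∈ range K, F h :=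
      calc ∑ l ∈ Ico (k + 1) K, F (k - l + (l - k)) = ∑ l ∈ Ico (k + 1) K, F (l - k) :=
            sum_congr rfl fun l hl => by rw [mem_Ico] at hl; congr 1; omega
        _ ≤ ∑ l ∈ Ico k K, F (l - k) :=
            sum_le_sum_of_subset_of_nonneg (Ico_subset_Ico_left k.le_succ) fun l _ _ => hF _
        _ = ∑ h ∈ range (K - k), F h := by
            rw [sum_Ico_eq_sum_range]; simp only [Nat.add_sub_cancel_left]
        _ ≤ ∑ h ∈ range K, F h :=
            sum_le_sum_of_subset_of_nonneg (range_subset_range.2 (Nat.sub_le K k)) fun h _ _ => hF h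
    rw [← sum_range_add_sum_Ico _ hkK]
    linarith
  calc ∑ k ∈ range K, ∑ l ∈ range K, F (k - l + (l - k)) ≤ ∑ _k ∈ range K, 2 * ∑ h ∈ range K, F h :=
        sum_le_sum row
    _ = 2 * K * ∑ h ∈ range K, F h := by rw [sum_const, card_range, nsmul_eq_mul]; ring

lemma norm_sum_range_add_sub_sum_range_le {E : Type*} [SeminormedAddCommGroup E] {f : ℕ → E}
    {B : ℝ} (hf : ∀ n, ‖f n‖ ≤ B) (N k : ℕ) :
    ‖∑ n ∈ range N, f (n + k) - ∑ n ∈ range N, f n‖ ≤ 2 * k * B := by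
  have telescope : ∑ n ∈ range N, f (n + k) - ∑ n ∈ range N, f n =
      ∑ j ∈ range k, f (N + j) - ∑ j ∈ range k, f j := by
    have h₁ := sum_range_add f k N
    have h₂ := sum_range_add f N k
    rw [add_comm k N] at h₁
    simp only [add_comm k] at h₁
    rw [sub_eq_sub_iff_add_eq_add, add_comm, ← h₁, h₂, add_comm]
  have bound : ∀ g : ℕ → E, (∀ n, ‖g n‖ ≤ B) → ‖∑ j ∈ range k, g j‖ ≤ k * B := fun g hg => by
    simpa using norm_sum_le_of_le (range k) fun j _ => hg j
  rw [telescope]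
  calc _ ≤ ‖∑ j ∈ range k, f (N + j)‖ + ‖∑ j ∈ range k, f j‖ := norm_sub_le _ _
    _ ≤ k * B + k * B := add_le_add (bound _ fun j => hf _) (bound _ hf)
    _ = 2 * k * B := by ring

section Cesaro

variable {E : Type*} [SeminormedAddCommGroup E] [NormedSpace ℝ E]

noncomputable def cesaro (x : ℕ → E) (N : ℕ) : E :=
  (N : ℝ)⁻¹ • ∑ n ∈ range N, x n

lemma cesaro_const {N : ℕ} (hN : N ≠ 0) (x : E) : cesaro (fun _ => x) N = x := by
  rw [cesaro, sum_const, card_range, ← Nat.cast_smul_eq_nsmul ℝ, smul_smul,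
    inv_mul_cancel₀ (Nat.cast_ne_zero.2 hN), one_smul]

lemma cesaro_sub (x y : ℕ → E) (N : ℕ) :
    cesaro (fun n => x n - y n) N = cesaro x N - cesaro y N := by
  simp only [cesaro, sum_sub_distrib, smul_sub]

lemma cesaro_cesaro_comm (x : ℕ → ℕ → E) (N K : ℕ) :
    cesaro (fun n => cesaro (x n) K) N = cesaro (fun k => cesaro (fun n => x n k) N) K := by
  simp only [cesaro, ← smul_sum, smul_comm (N : ℝ)⁻¹ (K : ℝ)⁻¹]
  rw [sum_comm]

lemma norm_cesaro_le {x : ℕ → E} {N : ℕ} {M : ℝ} (hM : 0 ≤ M) (hx : ∀ n < N, ‖x n‖ ≤ M) :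
    ‖cesaro x N‖ ≤ M := by
  rcases N.eq_zero_or_pos with rfl | hN
  · simpa [cesaro] using hM
  have hsum : ‖∑ n ∈ range N, x n‖ ≤ N * M := by
    simpa using norm_sum_le_of_le (range N) fun n hn => hx n (mem_range.1 hn)
  rw [cesaro, norm_smul, norm_inv, RCLike.norm_natCast, inv_mul_le_iff₀ (by positivity)]
  exact hsum

lemma norm_sub_cesaro_le {x : E} {y : ℕ → E} {K : ℕ} {δ : ℝ} (hK : 0 < K)
    (h : ∀ k < K, ‖x - y k‖ ≤ δ) : ‖x - cesaro y K‖ ≤ δ := by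
  rw [← cesaro_const hK.ne' x, ← cesaro_sub]
  exact norm_cesaro_le ((norm_nonneg _).trans (h 0 hK)) h

lemma sq_norm_cesaro_le_cesaro_sq_norm (x : ℕ → E) (N : ℕ) :
    ‖cesaro x N‖ ^ 2 ≤ cesaro (fun n => ‖x n‖ ^ 2) N := by
  have jensen := sum_div_card_sq_le_sum_sq_div_card (s := range N) (f := fun n => ‖x n‖)
  rw [card_range] at jensen
  calc ‖cesaro x N‖ ^ 2 ≤ ((∑ n ∈ range N, ‖x n‖) / N) ^ 2 := by
        rw [cesaro, norm_smul, norm_inv, RCLike.norm_natCast, inv_mul_eq_div]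
        gcongr
        exact norm_sum_le _ _
    _ ≤ cesaro (fun n => ‖x n‖ ^ 2) N := by
        rwa [cesaro, smul_eq_mul, inv_mul_eq_div]

lemma norm_cesaro_sub_cesaro_window_le {x : ℕ → E} {M : ℝ} (hx : ∀ n, ‖x n‖ ≤ M) {K : ℕ}
    (hK : 0 < K) (N : ℕ) :
    ‖cesaro x N - cesaro (fun n => cesaro (fun k => x (n + k)) K) N‖ ≤ 2 * K * M / N := by
  rw [cesaro_cesaro_comm]
  refine norm_sub_cesaro_le hK fun k hk => ?_
  rw [← cesaro_sub, cesaro, norm_smul, norm_inv, RCLike.norm_natCast, inv_mul_eq_div,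
    sum_sub_distrib, norm_sub_rev]
  have hM : 0 ≤ M := (norm_nonneg _).trans (hx 0)
  gcongr
  calc ‖∑ n ∈ range N, x (n + k) - ∑ n ∈ range N, x n‖ ≤ 2 * k * M :=
        norm_sum_range_add_sub_sum_range_le hx N k
    _ ≤ 2 * K * M := by gcongr

end Cesaro

lemma sum_norm_sq_sum_le {𝕜 E ι κ : Type*} [RCLike 𝕜] [SeminormedAddCommGroup E]
    [InnerProductSpace 𝕜 E] (s : Finset ι) (t : Finset κ) (x : ι → κ → E) :
    ∑ i ∈ s, ‖∑ k ∈ t, x i k‖ ^ 2 ≤ ∑ k ∈ t, ∑ l ∈ t, ‖∑ i ∈ s, ⟪x i k, x i l⟫_𝕜‖ := by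
  calc ∑ i ∈ s, ‖∑ k ∈ t, x i k‖ ^ 2
        = RCLike.re (∑ k ∈ t, ∑ l ∈ t, ∑ i ∈ s, ⟪x i k, x i l⟫_𝕜) := by
          simp only [@norm_sq_eq_re_inner 𝕜, sum_inner, inner_sum, map_sum]
          rw [sum_comm]
          conv_rhs => rw [sum_comm]
          exact sum_congr rfl fun _ _ => sum_comm
    _ ≤ ‖∑ k ∈ t, ∑ l ∈ t, ∑ i ∈ s, ⟪x i k, x i l⟫_𝕜‖ := RCLike.re_le_norm _
    _ ≤ ∑ k ∈ t, ∑ l ∈ t, ‖∑ i ∈ s, ⟪x i k, x i l⟫_𝕜‖ :=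
          (norm_sum_le _ _).trans (sum_le_sum fun _ _ => norm_sum_le _ _)

section Correlation

variable {E : Type*} [NormedAddCommGroup E] [InnerProductSpace ℂ E]

noncomputable def correlation (v : ℕ → E) (h N : ℕ) : ℝ :=
  ‖(N : ℂ)⁻¹ * ∑ n ∈ range N, ⟪v n, v (n + h)⟫_ℂ‖

lemma correlation_eq (v : ℕ → E) (h N : ℕ) :
    correlation v h N = ‖∑ n ∈ range N, ⟪v n, v (n + h)⟫_ℂ‖ / N := by
  rw [correlation, norm_mul, norm_inv, Complex.norm_natCast, inv_mul_eq_div]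

variable {v : ℕ → E} {M : ℝ}

lemma norm_inner_le_sq (hv : ∀ n, ‖v n‖ ≤ M) (m n : ℕ) : ‖⟪v m, v n⟫_ℂ‖ ≤ M ^ 2 :=
  calc ‖⟪v m, v n⟫_ℂ‖ ≤ ‖v m‖ * ‖v n‖ := norm_inner_le_norm _ _
    _ ≤ M * M := mul_le_mul (hv m) (hv n) (norm_nonneg _) ((norm_nonneg _).trans (hv m))
    _ = M ^ 2 := (sq M).symm

lemma correlation_le (hv : ∀ n, ‖v n‖ ≤ M) (h N : ℕ) : correlation v h N ≤ M ^ 2 := by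
  rw [correlation_eq]
  rcases N.eq_zero_or_pos with rfl | hN
  · simpa using sq_nonneg M
  rw [div_le_iff₀ (by positivity)]
  simpa [mul_comm] using norm_sum_le_of_le (range N) fun n _ => norm_inner_le_sq hv n (n + h)

lemma norm_sum_inner_shift_le (hv : ∀ n, ‖v n‖ ≤ M) (N : ℕ) {k l : ℕ} :
    ‖∑ n ∈ range N, ⟪v (n + k), v (n + l)⟫_ℂ‖ ≤
      ‖∑ n ∈ range N, ⟪v n, v (n + (k - l + (l - k)))⟫_ℂ‖ + 2 * min k l * M ^ 2 := by
  wlog hkl : k ≤ l generalizing k l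
  · have swap : ‖∑ n ∈ range N, ⟪v (n + k), v (n + l)⟫_ℂ‖ =
        ‖∑ n ∈ range N, ⟪v (n + l), v (n + k)⟫_ℂ‖ := by
      rw [← RCLike.norm_conj, map_sum]
      simp only [inner_conj_symm]
    rw [swap, add_comm (k - l), min_comm]
    exact this (le_of_not_ge hkl)
  obtain ⟨h, rfl⟩ := Nat.exists_eq_add_of_le hkl
  rw [show k - (k + h) + (k + h - k) = h by omega, min_eq_left hkl]
  simp only [← add_assoc]
  exact (norm_le_norm_add_norm_sub' _ _).trans (add_le_add_right
    (norm_sum_range_add_sub_sum_range_le (f := fun m => ⟪v m, v (m + h)⟫_ℂ)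
      (fun m => norm_inner_le_sq hv m (m + h)) N k) _)

lemma sum_sum_norm_sum_inner_le (hv : ∀ n, ‖v n‖ ≤ M) (N K : ℕ) :
    ∑ k ∈ range K, ∑ l ∈ range K, ‖∑ n ∈ range N, ⟪v (n + k), v (n + l)⟫_ℂ‖ ≤
      2 * K * ∑ h ∈ range K, ‖∑ n ∈ range N, ⟪v n, v (n + h)⟫_ℂ‖ + 2 * K ^ 3 * M ^ 2 := by
  calc _ ≤ ∑ k ∈ range K, ∑ l ∈ range K,
          (‖∑ n ∈ range N, ⟪v n, v (n + (k - l + (l - k)))⟫_ℂ‖ + 2 * K * M ^ 2) := by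
        gcongr with k hk
        refine (norm_sum_inner_shift_le hv N).trans ?_
        gcongr
        exact (min_le_left k l).trans (mem_range.1 hk).le
    _ = ∑ k ∈ range K, ∑ l ∈ range K, ‖∑ n ∈ range N, ⟪v n, v (n + (k - l + (l - k)))⟫_ℂ‖ +
          2 * K ^ 3 * M ^ 2 := by
        simp only [sum_add_distrib, sum_const, card_range, nsmul_eq_mul]
        ring
    _ ≤ _ := by
        gcongr
        exact sum_range_sum_range_dist_le
          (F := fun h => ‖∑ n ∈ range N, ⟪v n, v (n + h)⟫_ℂ‖) (fun h => norm_nonneg _) K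

lemma sq_norm_cesaro_window_le (hv : ∀ n, ‖v n‖ ≤ M) {K : ℕ} (hK : 0 < K) (N : ℕ) :
    ‖cesaro (fun n => cesaro (fun k => v (n + k)) K) N‖ ^ 2 ≤
      2 / K * ∑ h ∈ range K, correlation v h N + 2 * K * M ^ 2 / N := by
  have expand : ∑ n ∈ range N, ‖cesaro (fun k => v (n + k)) K‖ ^ 2 =
      ((K : ℝ)⁻¹) ^ 2 * ∑ n ∈ range N, ‖∑ k ∈ range K, v (n + k)‖ ^ 2 := by
    simp only [cesaro, norm_smul, mul_pow, norm_inv, RCLike.norm_natCast, mul_sum]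
  calc _ ≤ cesaro (fun n => ‖cesaro (fun k => v (n + k)) K‖ ^ 2) N :=
        sq_norm_cesaro_le_cesaro_sq_norm _ _
    _ = (N : ℝ)⁻¹ * ((K : ℝ)⁻¹) ^ 2 * ∑ n ∈ range N, ‖∑ k ∈ range K, v (n + k)‖ ^ 2 := by
        rw [cesaro, smul_eq_mul, expand, mul_assoc]
    _ ≤ (N : ℝ)⁻¹ * ((K : ℝ)⁻¹) ^ 2 *
          (2 * K * ∑ h ∈ range K, ‖∑ n ∈ range N, ⟪v n, v (n + h)⟫_ℂ‖ + 2 * K ^ 3 * M ^ 2) := by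
        gcongr
        exact (sum_norm_sq_sum_le _ _ _).trans (sum_sum_norm_sum_inner_le hv N K)
    _ = 2 / K * ∑ h ∈ range K, correlation v h N + 2 * K * M ^ 2 / N := by
        simp only [correlation_eq, ← sum_div]
        field_simp

lemma sq_norm_cesaro_le_sum_correlation (hv : ∀ n, ‖v n‖ ≤ M) {K : ℕ} (hK : 0 < K) (N : ℕ) :
    ‖cesaro v N‖ ^ 2 ≤ 2 / K * ∑ h ∈ range K, correlation v h N + 6 * K * M ^ 2 / N := by
  have hwin := sq_norm_cesaro_window_le hv hK N
  set w := cesaro (fun n => cesaro (fun k => v (n + k)) K) N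
  have hM : 0 ≤ M := (norm_nonneg _).trans (hv 0)
  have hA : ‖cesaro v N‖ ≤ M := norm_cesaro_le hM fun n _ => hv n
  have hw : ‖w‖ ≤ M := norm_cesaro_le hM fun n _ => norm_cesaro_le hM fun k _ => hv (n + k)
  have hAw : 2 * M * ‖cesaro v N - w‖ ≤ 4 * K * M ^ 2 / N :=
    calc 2 * M * ‖cesaro v N - w‖ ≤ 2 * M * (2 * K * M / N) := by
          gcongr; exact norm_cesaro_sub_cesaro_window_le hv hK N
      _ = 4 * K * M ^ 2 / N := by ring
  have hsq : ‖cesaro v N‖ ^ 2 ≤ ‖w‖ ^ 2 + 2 * M * ‖cesaro v N - w‖ := by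
    nlinarith [mul_le_mul_of_nonneg_right (norm_sub_norm_le (cesaro v N) w)
      (add_nonneg (norm_nonneg (cesaro v N)) (norm_nonneg w)),
      mul_le_mul_of_nonneg_left (add_le_add hA hw) (norm_nonneg (cesaro v N - w))]
  have errors : 2 * (K : ℝ) * M ^ 2 / N + 4 * K * M ^ 2 / N = 6 * K * M ^ 2 / N := by ring
  linarith

end Correlation

lemma limsup_le_of_eventually_le_mul_sum_add {ι : Type*} (s : Finset ι) {f e : ℕ → ℝ}
    {g : ι → ℕ → ℝ} {w : ℝ} (hw : 0 ≤ w) (hf : IsCoboundedUnder (· ≤ ·) atTop f)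
    (hg : ∀ i ∈ s, IsBoundedUnder (· ≤ ·) atTop (g i)) (he : Tendsto e atTop (𝓝 0))
    (h : ∀ᶠ N in atTop, f N ≤ w * ∑ i ∈ s, g i N + e N) :
    limsup f atTop ≤ w * ∑ i ∈ s, limsup (g i) atTop := by
  refine le_of_forall_pos_le_add fun ε hε => limsup_le_of_le hf ?_
  set δ := ε / (w * #s + 1)
  have hδ : 0 < δ := by positivity
  have hδε : w * (#s * δ) + δ = ε := by
    rw [← mul_assoc, ← add_one_mul]
    exact mul_div_cancel₀ _ (by positivity)
  have hg' : ∀ᶠ N in atTop, ∀ i ∈ s, g i N ≤ limsup (g i) atTop + δ :=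
    (eventually_all_finset s).2 fun i hi =>
      (eventually_lt_of_limsup_lt (lt_add_of_pos_right _ hδ) (hg i hi)).mono fun _ => le_of_lt
  filter_upwards [h, hg', he.eventually (ge_mem_nhds hδ)] with N hN hgN heN
  calc f N ≤ w * ∑ i ∈ s, g i N + e N := hN
    _ ≤ w * ∑ i ∈ s, (limsup (g i) atTop + δ) + δ := by gcongr with i hi; exact hgN i hi
    _ = w * ∑ i ∈ s, limsup (g i) atTop + ε := by
        rw [sum_add_distrib, sum_const, nsmul_eq_mul, ← hδε]
        ring

lemma le_limsup_of_eventually_le_add {L : ℝ} {a b : ℕ → ℝ}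
    (hb : IsBoundedUnder (· ≤ ·) atTop b) (ha : Tendsto a atTop (𝓝 0))
    (h : ∀ᶠ K in atTop, L ≤ a K + b K) : L ≤ limsup b atTop := by
  refine le_of_forall_pos_lt_add fun ε hε => ?_
  obtain ⟨K, hK, haK, hbK⟩ := (h.and ((ha.eventually (gt_mem_nhds (half_pos hε))).and
    (eventually_lt_of_limsup_lt (lt_add_of_pos_right _ (half_pos hε)) hb))).exists
  linarith

lemma inv_mul_sum_Icc_le {F : ℕ → ℝ} {C : ℝ} (hC : 0 ≤ C) (hF : ∀ h, F h ≤ C) (K : ℕ) :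
    (K : ℝ)⁻¹ * ∑ h ∈ Icc 1 K, F h ≤ C := by
  rcases K.eq_zero_or_pos with rfl | hK
  · simpa using hC
  rw [inv_mul_le_iff₀ (by positivity)]
  simpa using sum_le_sum fun h (_ : h ∈ Icc 1 K) => hF h

section VanDerCorput

variable {E : Type*} [NormedAddCommGroup E] [InnerProductSpace ℂ E]

noncomputable def meanCorrelation (v : ℕ → E) (K : ℕ) : ℝ :=
  (K : ℝ)⁻¹ * ∑ h ∈ Icc 1 K, limsup (correlation v h) atTop

variable {v : ℕ → E} {M : ℝ}

lemma limsup_correlation_nonneg (hv : ∀ n, ‖v n‖ ≤ M) (h : ℕ) :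
    0 ≤ limsup (correlation v h) atTop :=
  le_limsup_of_frequently_le (Frequently.of_forall fun _ => norm_nonneg _)
    (isBoundedUnder_of ⟨M ^ 2, correlation_le hv h⟩)

lemma limsup_correlation_le (hv : ∀ n, ‖v n‖ ≤ M) (h : ℕ) :
    limsup (correlation v h) atTop ≤ M ^ 2 :=
  limsup_le_of_le (isCoboundedUnder_le_of_le atTop fun _ => norm_nonneg _)
    (Eventually.of_forall (correlation_le hv h))

lemma meanCorrelation_nonneg (hv : ∀ n, ‖v n‖ ≤ M) (K : ℕ) : 0 ≤ meanCorrelation v K :=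
  mul_nonneg (by positivity) (sum_nonneg fun h _ => limsup_correlation_nonneg hv h)

lemma meanCorrelation_le (hv : ∀ n, ‖v n‖ ≤ M) (K : ℕ) : meanCorrelation v K ≤ M ^ 2 :=
  inv_mul_sum_Icc_le (sq_nonneg M) (limsup_correlation_le hv) K

lemma limsup_meanCorrelation_nonneg (hv : ∀ n, ‖v n‖ ≤ M) :
    0 ≤ limsup (meanCorrelation v) atTop :=
  le_limsup_of_frequently_le (Frequently.of_forall (meanCorrelation_nonneg hv))
    (isBoundedUnder_of ⟨M ^ 2, meanCorrelation_le hv⟩)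

lemma limsup_sq_norm_cesaro_le (hv : ∀ n, ‖v n‖ ≤ M) {K : ℕ} (hK : 0 < K) :
    limsup (fun N => ‖cesaro v N‖ ^ 2) atTop ≤
      2 / K * ∑ h ∈ range K, limsup (correlation v h) atTop :=
  limsup_le_of_eventually_le_mul_sum_add (range K) (by positivity)
    (isCoboundedUnder_le_of_le atTop fun _ => sq_nonneg _)
    (fun h _ => isBoundedUnder_of ⟨M ^ 2, correlation_le hv h⟩)
    (tendsto_const_div_atTop_nhds_zero_nat _)
    (Eventually.of_forall (sq_norm_cesaro_le_sum_correlation hv hK))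

theorem limsup_sq_norm_cesaro_le_two_mul (hv : ∀ n, ‖v n‖ ≤ M) :
    limsup (fun N => ‖cesaro v N‖ ^ 2) atTop ≤ 2 * limsup (meanCorrelation v) atTop := by
  have fixed_window : ∀ᶠ K : ℕ in atTop,
      limsup (fun N => ‖cesaro v N‖ ^ 2) atTop / 2 ≤ M ^ 2 / K + meanCorrelation v K := by
    filter_upwards [eventually_gt_atTop 0] with K hK
    have split := sum_range_le_add_sum_Icc (limsup_correlation_nonneg hv) K
    have diagonal := limsup_correlation_le hv 0
    rw [div_le_iff₀ two_pos]
    calc limsup (fun N => ‖cesaro v N‖ ^ 2) atTop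
        ≤ 2 / K * ∑ h ∈ range K, limsup (correlation v h) atTop := limsup_sq_norm_cesaro_le hv hK
      _ ≤ 2 / K * (M ^ 2 + ∑ h ∈ Icc 1 K, limsup (correlation v h) atTop) := by
          gcongr; linarith
      _ = (M ^ 2 / K + meanCorrelation v K) * 2 := by rw [meanCorrelation]; ring
  have := le_limsup_of_eventually_le_add (isBoundedUnder_of ⟨M ^ 2, meanCorrelation_le hv⟩)
    (tendsto_const_div_atTop_nhds_zero_nat _) fixed_window
  linarith

end VanDerCorput

/-- (van der Corput inequality in Hilbert space) For a bounded sequence `(uₙ)` in a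
Hilbert space,
`limsup_N ‖(1/N)∑_{n=1}^N uₙ‖² ≤ 4 limsup_H (1/H)∑_{h=1}^H limsup_N |(1/N)∑_{n=1}^N ⟨uₙ,u_{n+h}⟩|`. -/
theorem stmt6 {H : Type*} [NormedAddCommGroup H] [InnerProductSpace ℂ H]
    (u : ℕ → H) (hb : ∃ M : ℝ, ∀ n, ‖u n‖ ≤ M) :
    Filter.limsup (fun N : ℕ => ‖(N : ℝ)⁻¹ • ∑ n ∈ Finset.Icc 1 N, u n‖ ^ 2) atTop ≤
      4 * Filter.limsup (fun K : ℕ => (K : ℝ)⁻¹ * ∑ h ∈ Finset.Icc 1 K,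
        Filter.limsup (fun N : ℕ => ‖(N : ℂ)⁻¹ *
          ∑ n ∈ Finset.Icc 1 N, (inner ℂ (u n) (u (n + h)) : ℂ)‖) atTop) atTop := by
  obtain ⟨M, hM⟩ := hb
  set v : ℕ → H := fun n => u (n + 1)
  have hv : ∀ n, ‖v n‖ ≤ M := fun n => hM (n + 1)
  have hcesaro : ∀ N : ℕ, (N : ℝ)⁻¹ • ∑ n ∈ Icc 1 N, u n = cesaro v N := fun N => by
    rw [sum_Icc_one_eq_sum_range, cesaro]
  have hcorr : ∀ h N : ℕ, ‖(N : ℂ)⁻¹ * ∑ n ∈ Icc 1 N, ⟪u n, u (n + h)⟫_ℂ‖ = correlation v h N :=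
    fun h N => by simp only [sum_Icc_one_eq_sum_range, correlation, v, add_right_comm _ 1 h]
  simp only [hcesaro, hcorr]
  change _ ≤ 4 * limsup (meanCorrelation v) atTop
  linarith [limsup_sq_norm_cesaro_le_two_mul hv, limsup_meanCorrelation_nonneg hv]
end

section
/- Let g be a Fejér function, i.e. g is C¹ on a half-line, g'(x) tends monotonically to 0 as x → ∞, and x·|g'(x)| → ∞. Then the sequence (g(n) mod 1)_{n∈ℕ} is equidistributed in the torus ℝ/ℤ. -/
/-!
Write `e(x) = exp (2πix)`. If the increments `d n = a (n + 1) - a n` of a real sequence decrease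
and lie in `(0, 1/2]`, then `e(a n) = (e(a n) - e(a (n + 1))) (1 + i cot (π d n)) / 2`, and Abel
summation against the increasing weights `cot (π d n)` bounds `‖∑_{M ≤ n ≤ N} e(a n)‖` by
`1 + cot (π d N) ≤ 1 + 1 / (π d N)` (Kusmin–Landau). When `a n = f n` with `f'` decreasing to `0`,
the mean value theorem gives `d N ≥ f' (N + 1)`, so the Weyl average of `f` is
`O(1 / N + 1 / (N f' (N + 1)))`, which tends to `0` because `x f' x → ∞`. An increasing `f'` is
handled by passing to `-f`, which conjugates the Weyl average, and `h g` inherits all hypotheses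
from `g` for every nonzero integer `h`.
-/

open Filter Set

open Real Topology
open scoped Complex
open Complex (I)

namespace Real

lemma cot_nonneg {x : ℝ} (hx₀ : 0 < x) (hx : x ≤ π / 2) : 0 ≤ cot x := by
  rw [cot_eq_cos_div_sin]
  exact div_nonneg (cos_nonneg_of_mem_Icc ⟨by linarith, hx⟩)
    (sin_pos_of_pos_of_lt_pi hx₀ (by linarith)).le

lemma cot_antitoneOn : AntitoneOn cot (Ioo 0 π) := by
  intro x hx y hy hxy
  have hsx := sin_pos_of_pos_of_lt_pi hx.1 hx.2
  have hsy := sin_pos_of_pos_of_lt_pi hy.1 hy.2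
  have hsub : 0 ≤ sin (y - x) :=
    sin_nonneg_of_nonneg_of_le_pi (by linarith) (by linarith [hy.2, hx.1])
  rw [sin_sub] at hsub
  rw [cot_eq_cos_div_sin, cot_eq_cos_div_sin, div_le_div_iff₀ hsy hsx]
  linarith

lemma cot_le_inv {x : ℝ} (hx₀ : 0 < x) (hx : x ≤ π / 2) : cot x ≤ x⁻¹ := by
  have hsin := sin_pos_of_pos_of_lt_pi hx₀ (by linarith [pi_pos])
  have key : x * cos x ≤ sin x := by
    rcases hx.lt_or_eq with hx | rfl
    · have hcos' := cos_pos_of_mem_Ioo ⟨by linarith, hx⟩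
      have := le_tan hx₀.le hx
      rwa [tan_eq_sin_div_cos, le_div_iff₀ hcos'] at this
    · simp
  rw [cot_eq_cos_div_sin, div_le_iff₀ hsin, inv_mul_eq_div, le_div_iff₀ hx₀]
  linarith

end Real

lemma one_sub_exp_mul_one_add_cot {θ : ℝ} (h : sin θ ≠ 0) :
    (1 - cexp (2 * θ * I)) * (1 + I * (cot θ : ℂ)) = 2 := by
  have hsin : Complex.sin θ ≠ 0 := by exact_mod_cast h
  have hexp : cexp (2 * θ * I) = (Complex.cos θ + Complex.sin θ * I) ^ 2 := by
    rw [← Complex.exp_mul_I, ← Complex.exp_nat_mul]; push_cast; ring_nf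
  rw [hexp, Complex.ofReal_cot, Complex.cot_eq_cos_div_sin]
  field_simp
  linear_combination (Complex.sin θ - Complex.cos θ * I) * Complex.sin_sq_add_cos_sq (θ : ℂ)
    - (Complex.sin θ ^ 3 + 2 * Complex.cos θ ^ 2 * Complex.sin θ
      + Complex.cos θ * Complex.sin θ ^ 2 * I) * Complex.I_sq

lemma norm_exp_two_pi_I_mul (x : ℝ) : ‖cexp (2 * π * I * x)‖ = 1 := by
  rw [show 2 * π * I * x = ((2 * π * x : ℝ) : ℂ) * I by push_cast; ring]
  exact Complex.norm_exp_ofReal_mul_I _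

lemma norm_sum_smul_sub_le {V : Type*} [SeminormedAddCommGroup V] [NormedSpace ℝ V]
    {u : ℕ → V} {c : ℕ → ℝ} {B : ℝ} {M N : ℕ} (hu : ∀ n, ‖u n‖ ≤ B) (hc₀ : 0 ≤ c M)
    (hc : MonotoneOn c (Icc M N)) (hMN : M ≤ N) :
    ‖∑ n ∈ Finset.Icc M N, c n • (u n - u (n + 1))‖ ≤ 2 * B * c N := by
  have key : ∀ K, M ≤ K → K ≤ N →
      ‖∑ n ∈ Finset.Icc M K, c n • (u n - u (n + 1)) + c K • u (K + 1)‖ ≤ B * c K := by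
    intro K hMK
    induction K, hMK using Nat.le_induction with
    | base =>
      intro _
      rw [Finset.Icc_self, Finset.sum_singleton, smul_sub, sub_add_cancel, norm_smul,
        Real.norm_of_nonneg hc₀, mul_comm]
      exact mul_le_mul_of_nonneg_right (hu M) hc₀
    | succ K hMK ih =>
      intro hK
      have hcK : c K ≤ c (K + 1) := hc ⟨hMK, by omega⟩ ⟨by omega, hK⟩ (by omega)
      calc ‖∑ n ∈ Finset.Icc M (K + 1), c n • (u n - u (n + 1)) + c (K + 1) • u (K + 1 + 1)‖
          = ‖(∑ n ∈ Finset.Icc M K, c n • (u n - u (n + 1)) + c K • u (K + 1))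
              + (c (K + 1) - c K) • u (K + 1)‖ := by
            rw [Finset.sum_Icc_succ_top (by omega), smul_sub, sub_smul]; congr 1; abel
        _ ≤ B * c K + (c (K + 1) - c K) * B := by
            refine norm_add_le_of_le (ih (by omega)) ?_
            rw [norm_smul, Real.norm_of_nonneg (by linarith)]
            exact mul_le_mul_of_nonneg_left (hu _) (by linarith)
        _ = B * c (K + 1) := by ring
  have hcN : 0 ≤ c N := hc₀.trans (hc (left_mem_Icc.2 hMN) (right_mem_Icc.2 hMN) hMN)
  calc ‖∑ n ∈ Finset.Icc M N, c n • (u n - u (n + 1))‖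
      = ‖(∑ n ∈ Finset.Icc M N, c n • (u n - u (n + 1)) + c N • u (N + 1))
          - c N • u (N + 1)‖ := by
        rw [add_sub_cancel_right]
    _ ≤ B * c N + c N * B := by
        refine norm_sub_le_of_le (key N hMN le_rfl) ?_
        rw [norm_smul, Real.norm_of_nonneg hcN]
        exact mul_le_mul_of_nonneg_left (hu _) hcN
    _ = 2 * B * c N := by ring

theorem norm_sum_exp_le_one_add_cot {a : ℕ → ℝ} {M N : ℕ} (hMN : M ≤ N)
    (hpos : 0 < a (N + 1) - a N) (hhalf : a (M + 1) - a M ≤ 1 / 2)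
    (hanti : AntitoneOn (fun n => a (n + 1) - a n) (Icc M N)) :
    ‖∑ n ∈ Finset.Icc M N, cexp (2 * π * I * a n)‖ ≤ 1 + cot (π * (a (N + 1) - a N)) := by
  set u : ℕ → ℂ := fun n => cexp (2 * π * I * a n)
  set c : ℕ → ℝ := fun n => cot (π * (a (n + 1) - a n))
  have hθ : ∀ n ∈ Icc M N, π * (a (n + 1) - a n) ∈ Ioc 0 (π / 2) := fun n hn =>
    ⟨mul_pos pi_pos (hpos.trans_le (hanti hn (right_mem_Icc.2 hMN) hn.2)), by
      nlinarith [pi_pos, hanti (left_mem_Icc.2 hMN) hn hn.1]⟩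
  have hu : ∀ n, ‖u n‖ ≤ 1 := fun n => (norm_exp_two_pi_I_mul _).le
  have hc : MonotoneOn c (Icc M N) := fun m hm n hn hmn =>
    cot_antitoneOn ⟨(hθ n hn).1, by linarith [(hθ n hn).2, pi_pos]⟩
      ⟨(hθ m hm).1, by linarith [(hθ m hm).2, pi_pos]⟩
      (mul_le_mul_of_nonneg_left (hanti hm hn hmn) pi_pos.le)
  have hu_eq : ∀ n ∈ Finset.Icc M N,
      u n = (1 / 2 : ℂ) * (u n - u (n + 1)) + I / 2 * (c n • (u n - u (n + 1))) := by
    intro n hn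
    have hθn := hθ n (Finset.mem_Icc.1 hn)
    have hid := one_sub_exp_mul_one_add_cot (sin_pos_of_pos_of_lt_pi hθn.1
      (by linarith [hθn.2, pi_pos])).ne'
    have hstep : u (n + 1) = u n * cexp (2 * ((π * (a (n + 1) - a n) : ℝ) : ℂ) * I) := by
      simp only [u, ← Complex.exp_add]; push_cast; ring_nf
    rw [hstep, Complex.real_smul]
    linear_combination (-u n / 2) * hid
  have htel := norm_sum_smul_sub_le (c := fun _ => (1 : ℝ)) hu zero_le_one monotoneOn_const hMN
  simp only [one_smul, mul_one] at htel
  have hweighted := norm_sum_smul_sub_le hu (cot_nonneg (hθ M (left_mem_Icc.2 hMN)).1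
    (hθ M (left_mem_Icc.2 hMN)).2) hc hMN
  calc ‖∑ n ∈ Finset.Icc M N, u n‖
      = ‖(1 / 2 : ℂ) * ∑ n ∈ Finset.Icc M N, (u n - u (n + 1))
          + I / 2 * ∑ n ∈ Finset.Icc M N, c n • (u n - u (n + 1))‖ := by
        rw [Finset.sum_congr rfl hu_eq, Finset.sum_add_distrib, Finset.mul_sum, Finset.mul_sum]
    _ ≤ 1 / 2 * 2 + 1 / 2 * (2 * 1 * c N) := by
        refine norm_add_le_of_le ?_ ?_ <;> rw [norm_mul] <;> gcongr <;> simp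
    _ = 1 + c N := by ring

lemma sub_mem_Icc_of_antitoneOn_deriv {f : ℝ → ℝ} {s : Set ℝ} (hs : s.OrdConnected)
    (hf : DifferentiableOn ℝ f s) (hf' : AntitoneOn (deriv f) s) {x y : ℝ} (hx : x ∈ s)
    (hy : y ∈ s) (hxy : x ≤ y) :
    f y - f x ∈ Icc (deriv f y * (y - x)) (deriv f x * (y - x)) := by
  have hsub : Icc x y ⊆ s := hs.out hx hy
  have hcont : ContinuousOn f (Icc x y) := hf.continuousOn.mono hsub
  have hdiff : DifferentiableOn ℝ f (interior (Icc x y)) :=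
    hf.mono (interior_subset.trans hsub)
  have hmem : ∀ z ∈ interior (Icc x y), z ∈ s ∧ x ≤ z ∧ z ≤ y := fun z hz =>
    ⟨hsub (interior_subset hz), (interior_subset hz).1, (interior_subset hz).2⟩
  exact ⟨(convex_Icc x y).mul_sub_le_image_sub_of_le_deriv hcont hdiff
      (fun z hz => hf' (hmem z hz).1 hy (hmem z hz).2.2) x ⟨le_rfl, hxy⟩ y ⟨hxy, le_rfl⟩ hxy,
    (convex_Icc x y).image_sub_le_mul_sub_of_deriv_le hcont hdiff
      (fun z hz => hf' hx (hmem z hz).1 (hmem z hz).2.1) x ⟨le_rfl, hxy⟩ y ⟨hxy, le_rfl⟩ hxy⟩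

theorem norm_sum_exp_le_of_antitoneOn_deriv {f : ℝ → ℝ} {a : ℝ}
    (hf : DifferentiableOn ℝ f (Ioi a)) (hf' : AntitoneOn (deriv f) (Ioi a)) {M N : ℕ}
    (haM : a < M) (hMN : M ≤ N) (hpos : 0 < deriv f (N + 1)) (hhalf : deriv f M ≤ 1 / 2) :
    ‖∑ n ∈ Finset.Icc M N, cexp (2 * π * I * f n)‖ ≤ 1 + (π * deriv f (N + 1))⁻¹ := by
  have hmem : ∀ n : ℕ, M ≤ n → (n : ℝ) ∈ Ioi a := fun n hn =>
    haM.trans_le (by exact_mod_cast hn)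
  have hmem' : ∀ n : ℕ, M ≤ n → (n : ℝ) + 1 ∈ Ioi a := fun n hn =>
    mem_Ioi.2 ((hmem n hn).out.trans (lt_add_one _))
  have hd : ∀ n : ℕ, M ≤ n →
      deriv f (n + 1) ≤ f (↑(n + 1)) - f n ∧ f (↑(n + 1)) - f n ≤ deriv f n := by
    intro n hn
    have := sub_mem_Icc_of_antitoneOn_deriv ordConnected_Ioi hf hf' (hmem n hn) (hmem' n hn)
      (le_add_of_nonneg_right zero_le_one)
    push_cast
    simpa using this
  have hdN : deriv f (N + 1) ≤ f (↑(N + 1)) - f N := (hd N hMN).1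
  have hanti : AntitoneOn (fun n : ℕ => f (↑(n + 1)) - f n) (Icc M N) := by
    intro m hm n hn hmn
    rcases hmn.eq_or_lt with rfl | hlt
    · exact le_rfl
    exact (hd n hn.1).2.trans ((hf' (hmem' m hm.1) (hmem n hn.1) (by exact_mod_cast hlt)).trans
      (hd m hm.1).1)
  have hKL := norm_sum_exp_le_one_add_cot (a := fun n => f n) hMN
    (hpos.trans_le hdN) ((hd M le_rfl).2.trans hhalf) hanti
  have hθN : π * (f (↑(N + 1)) - f N) ≤ π / 2 := by
    nlinarith [pi_pos, (hd N hMN).2, hf' (hmem M le_rfl) (hmem N hMN) (by exact_mod_cast hMN)]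
  calc ‖∑ n ∈ Finset.Icc M N, cexp (2 * π * I * f n)‖
      ≤ 1 + cot (π * (f (↑(N + 1)) - f N)) := hKL
    _ ≤ 1 + (π * (f (↑(N + 1)) - f N))⁻¹ := by
        gcongr; exact cot_le_inv (mul_pos pi_pos (hpos.trans_le hdN)) hθN
    _ ≤ 1 + (π * deriv f (N + 1))⁻¹ := by gcongr

lemma norm_sum_Icc_one_le_add_norm_sum_Icc {V : Type*} [SeminormedAddCommGroup V] {u : ℕ → V}
    (hu : ∀ n, ‖u n‖ ≤ 1) {M N : ℕ} (hM : 1 ≤ M) (hMN : M ≤ N) :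
    ‖∑ n ∈ Finset.Icc 1 N, u n‖ ≤ M + ‖∑ n ∈ Finset.Icc M N, u n‖ := by
  rw [← Finset.Ico_add_one_right_eq_Icc, ← Finset.Ico_add_one_right_eq_Icc,
    ← Finset.sum_Ico_consecutive _ hM (by omega : M ≤ N + 1)]
  refine norm_add_le_of_le ((norm_sum_le_of_le _ fun n _ => hu n).trans ?_) le_rfl
  simp

noncomputable def weylAverage (f : ℝ → ℝ) (N : ℕ) : ℂ :=
  (N : ℂ)⁻¹ * ∑ n ∈ Finset.Icc 1 N, cexp (2 * π * I * f n)

lemma weylAverage_neg (f : ℝ → ℝ) (N : ℕ) :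
    weylAverage (-f) N = (starRingEnd ℂ) (weylAverage f N) := by
  simp only [weylAverage, map_mul, map_inv₀, map_sum, map_natCast, ← Complex.exp_conj,
    Complex.conj_I, Complex.conj_ofReal, map_ofNat, Pi.neg_apply, Complex.ofReal_neg]
  congr 1
  refine Finset.sum_congr rfl fun n _ => ?_
  ring_nf

theorem tendsto_weylAverage_of_antitoneOn_deriv {f : ℝ → ℝ} {a : ℝ}
    (hf : DifferentiableOn ℝ f (Ioi a)) (hf' : AntitoneOn (deriv f) (Ioi a))
    (h0 : Tendsto (deriv f) atTop (𝓝 0)) (hinf : Tendsto (fun x => x * deriv f x) atTop atTop) :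
    Tendsto (weylAverage f) atTop (𝓝 0) := by
  obtain ⟨M, ⟨haM, hhalf⟩, hM⟩ : ∃ M : ℕ, (a < M ∧ deriv f M ≤ 1 / 2) ∧ 1 ≤ M :=
    ((tendsto_natCast_atTop_atTop.eventually ((eventually_gt_atTop a).and
      (h0.eventually (eventually_le_nhds (by norm_num))))).and (eventually_ge_atTop 1)).exists
  have hshift : Tendsto (fun N : ℕ => (N : ℝ) + 1) atTop atTop :=
    tendsto_atTop_add_const_right _ 1 tendsto_natCast_atTop_atTop
  have hNd : Tendsto (fun N : ℕ => (N : ℝ) * deriv f (N + 1)) atTop atTop :=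
    ((hinf.comp hshift).atTop_add (h0.comp hshift).neg).congr fun N => by simp; ring
  have hpos : ∀ᶠ N : ℕ in atTop, 0 < deriv f (N + 1) :=
    (hNd.eventually_gt_atTop 0).mono fun N hN => pos_of_mul_pos_right hN N.cast_nonneg
  have hbound : Tendsto
      (fun N : ℕ => (M + 1 : ℝ) * (N : ℝ)⁻¹ + π⁻¹ * ((N : ℝ) * deriv f (N + 1))⁻¹) atTop (𝓝 0) := by
    simpa using ((tendsto_inv_atTop_zero.comp tendsto_natCast_atTop_atTop).const_mul _).add
      ((tendsto_inv_atTop_zero.comp hNd).const_mul _)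
  refine squeeze_zero_norm' ?_ hbound
  filter_upwards [hpos, eventually_ge_atTop M] with N hderivN hMN
  have hN : (0 : ℝ) < N := by exact_mod_cast hM.trans hMN
  calc ‖weylAverage f N‖
      = (N : ℝ)⁻¹ * ‖∑ n ∈ Finset.Icc 1 N, cexp (2 * π * I * f n)‖ := by
        simp [weylAverage]
    _ ≤ (N : ℝ)⁻¹ * (M + (1 + (π * deriv f (N + 1))⁻¹)) := by
        gcongr
        refine (norm_sum_Icc_one_le_add_norm_sum_Icc (fun n => (norm_exp_two_pi_I_mul _).le)
          hM hMN).trans ?_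
        gcongr
        exact norm_sum_exp_le_of_antitoneOn_deriv hf hf' haM hMN hderivN hhalf
    _ = _ := by field_simp; ring

lemma monotoneOn_or_antitoneOn_const_mul {φ : ℝ → ℝ} {s : Set ℝ} (c : ℝ)
    (h : MonotoneOn φ s ∨ AntitoneOn φ s) :
    MonotoneOn (fun x => c * φ x) s ∨ AntitoneOn (fun x => c * φ x) s := by
  rcases le_total 0 c with hc | hc <;> rcases h with h | h
  · exact .inl fun x hx y hy hxy => mul_le_mul_of_nonneg_left (h hx hy hxy) hc
  · exact .inr fun x hx y hy hxy => mul_le_mul_of_nonneg_left (h hx hy hxy) hc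
  · exact .inr fun x hx y hy hxy => mul_le_mul_of_nonpos_left (h hx hy hxy) hc
  · exact .inl fun x hx y hy hxy => mul_le_mul_of_nonpos_left (h hx hy hxy) hc

theorem tendsto_weylAverage_of_monotoneOn_deriv_or_antitoneOn_deriv {f : ℝ → ℝ} {a : ℝ}
    (hf : DifferentiableOn ℝ f (Ioi a))
    (hmono : MonotoneOn (deriv f) (Ioi a) ∨ AntitoneOn (deriv f) (Ioi a))
    (h0 : Tendsto (deriv f) atTop (𝓝 0))
    (hinf : Tendsto (fun x => x * |deriv f x|) atTop atTop) :
    Tendsto (weylAverage f) atTop (𝓝 0) := by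
  have of_antitoneOn : ∀ f : ℝ → ℝ, DifferentiableOn ℝ f (Ioi a) → AntitoneOn (deriv f) (Ioi a) →
      Tendsto (deriv f) atTop (𝓝 0) → Tendsto (fun x => x * |deriv f x|) atTop atTop →
      Tendsto (weylAverage f) atTop (𝓝 0) := by
    intro f hf hf' h0 hinf
    refine tendsto_weylAverage_of_antitoneOn_deriv hf hf' h0 (hinf.congr' ?_)
    filter_upwards [eventually_gt_atTop a] with x hx
    rw [abs_of_nonneg (le_of_tendsto h0 ((eventually_ge_atTop x).mono fun y hy =>
      hf' hx (mem_Ioi.2 (hx.trans_le hy)) hy))]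
  rcases hmono with hmono | hanti
  · have hneg := of_antitoneOn (-f) hf.neg (by rw [deriv.neg']; exact hmono.neg)
      (by simpa [deriv.neg'] using h0.neg) (by simpa [deriv.neg'] using hinf)
    simpa [Function.comp_def, weylAverage_neg] using
      (Complex.continuous_conj.tendsto 0).comp hneg
  · exact of_antitoneOn f hf hanti h0 hinf

theorem stmt7_general (g : ℝ → ℝ) (x₀ : ℝ)
    (hg : ContDiffOn ℝ 1 g (Ici x₀))
    (hmono : MonotoneOn (deriv g) (Ici x₀) ∨ AntitoneOn (deriv g) (Ici x₀))
    (h0 : Tendsto (deriv g) atTop (nhds 0))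
    (hinf : Tendsto (fun x => x * |deriv g x|) atTop atTop) :
    ∀ h : ℤ, h ≠ 0 →
      Tendsto (fun N : ℕ => (N : ℂ)⁻¹ * ∑ n ∈ Finset.Icc 1 N,
        Complex.exp (2 * Real.pi * Complex.I * (h : ℂ) * (g (n : ℝ) : ℂ)))
        atTop (nhds 0) := by
  intro h hh
  have hderiv : deriv (fun x => (h : ℝ) * g x) = fun x => h * deriv g x :=
    deriv_const_mul_field' _
  have hmono' := (monotoneOn_or_antitoneOn_const_mul (h : ℝ) hmono).imp
    (fun hm => hm.mono Ioi_subset_Ici_self) (fun ha => ha.mono Ioi_subset_Ici_self)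
  rw [← hderiv] at hmono'
  have hweyl := tendsto_weylAverage_of_monotoneOn_deriv_or_antitoneOn_deriv
    (((hg.differentiableOn one_ne_zero).mono Ioi_subset_Ici_self).const_mul (h : ℝ)) hmono'
    (by simpa [hderiv] using h0.const_mul (h : ℝ))
    (by simpa [hderiv, abs_mul, mul_left_comm] using
      hinf.const_mul_atTop (abs_pos.2 (Int.cast_ne_zero.2 hh)))
  refine hweyl.congr fun N => ?_
  simp only [weylAverage]
  push_cast
  ring_nf

/-- (Fejér) If `g` is C¹ on `[x₀, ∞)` with `g'` tending monotonically to `0` and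
`x * |g'(x)| → ∞`, then `(g(n))ₙ` is equidistributed mod 1, in the sense of Weyl:
for every nonzero integer `h`, `(1/N) ∑_{n=1}^N e^{2πi h g(n)} → 0`. -/
theorem stmt7 (g : ℝ → ℝ) (x₀ : ℝ) (hx₀ : 0 ≤ x₀)
    (hg : ContDiffOn ℝ 1 g (Ici x₀))
    (hmono : MonotoneOn (deriv g) (Ici x₀) ∨ AntitoneOn (deriv g) (Ici x₀))
    (h0 : Tendsto (deriv g) atTop (nhds 0))
    (hinf : Tendsto (fun x => x * |deriv g x|) atTop atTop) :
    ∀ h : ℤ, h ≠ 0 →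
      Tendsto (fun N : ℕ => (N : ℂ)⁻¹ * ∑ n ∈ Finset.Icc 1 N,
        Complex.exp (2 * Real.pi * Complex.I * (h : ℂ) * (g (n : ℝ) : ℂ)))
        atTop (nhds 0) :=
  stmt7_general g x₀ hg hmono h0 hinf
end

section
/- Let (a(n)) be a sequence of reals such that (a(n)/m mod 1)_{n} is equidistributed in ℝ/ℤ for every integer m ≥ 2. Then for every rational γ ∈ ℚ∖ℤ, lim_{N→∞} (1/N)∑_{n=1}^N e^{2πi γ ⌊a(n)⌋} = 0. -/
/-!
Write `γ = p / q` in lowest terms, `zₙ = a(n) / q mod 1` and `ω = e(γ)` with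
`e(x) = exp(2πix)`, a `q`-th root of unity different from `1`. Since `⌊a(n)⌋ ≡ j (mod q)`
exactly when `zₙ` lies in the arc `[j/q, (j+1)/q)`, the mean of `e(γ ⌊a(n)⌋)` is
`∑ⱼ ωʲ νₙ(arc j)`, where `νₙ` is the empirical measure of `z₁, …, zₙ`. By density of
trigonometric polynomials, the hypothesis for `m = q` makes `νₙ` converge weakly to Haar measure,
and the portmanteau theorem applies to arcs since their boundaries are finite. The arcs are
rotations of each other, so the limit is `Haar(arc 0) · ∑ⱼ ωʲ = 0`.
-/

open Filter Set MeasureTheory AddCircle Topology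
open scoped ENNReal

lemma geom_sum_eq_zero_of_pow_eq_one {R : Type*} [CommRing R] [IsDomain R] {ω : R} {q : ℕ}
    (hωq : ω ^ q = 1) (hω : ω ≠ 1) : ∑ j ∈ Finset.range q, ω ^ j = 0 := by
  have h := geom_sum_mul ω q
  rw [hωq, sub_self] at h
  exact (mul_eq_zero.mp h).resolve_right (sub_ne_zero.mpr hω)

namespace Rat

lemma cast_mul_den_eq_num (γ : ℚ) : ((γ : ℝ) : ℂ) * γ.den = γ.num := by
  exact_mod_cast γ.mul_den_eq_num

lemma cexp_mul_intCast_emod_den (γ : ℚ) (m : ℤ) :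
    Complex.exp (2 * Real.pi * Complex.I * ((γ : ℝ) : ℂ) * (m : ℂ)) =
      Complex.exp (2 * Real.pi * Complex.I * ((γ : ℝ) : ℂ) * ((m % γ.den : ℤ) : ℂ)) := by
  have h : 2 * Real.pi * Complex.I * ((γ : ℝ) : ℂ) * (m : ℂ) =
      2 * Real.pi * Complex.I * ((γ : ℝ) : ℂ) * ((m % γ.den : ℤ) : ℂ) +
        (γ.num * (m / γ.den) : ℤ) * (2 * Real.pi * Complex.I) := by
    conv_lhs => rw [← Int.emod_add_mul_ediv m γ.den]
    push_cast
    linear_combination (2 * Real.pi * Complex.I * (m / γ.den : ℤ)) * γ.cast_mul_den_eq_num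
  rw [h, Complex.exp_add, Complex.exp_int_mul_two_pi_mul_I, mul_one]

lemma sum_range_den_cexp_eq_zero {γ : ℚ} (hγ : γ.den ≠ 1) :
    ∑ j ∈ Finset.range γ.den,
      Complex.exp (2 * Real.pi * Complex.I * ((γ : ℝ) : ℂ) * (j : ℂ)) = 0 := by
  set ω := Complex.exp (2 * Real.pi * Complex.I * ((γ : ℝ) : ℂ))
  have hpow : ∀ j : ℕ, Complex.exp (2 * Real.pi * Complex.I * ((γ : ℝ) : ℂ) * (j : ℂ)) = ω ^ j :=
    fun j => by rw [← Complex.exp_nat_mul, mul_comm]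
  simp_rw [hpow]
  refine geom_sum_eq_zero_of_pow_eq_one ?_ fun hω => hγ ?_
  · rw [← hpow, mul_assoc, γ.cast_mul_den_eq_num, mul_comm, Complex.exp_int_mul_two_pi_mul_I]
  · obtain ⟨n, hn⟩ := Complex.exp_eq_one_iff.mp hω
    have hγn : ((γ : ℝ) : ℂ) = n := by
      have h2πI : 2 * (Real.pi : ℂ) * Complex.I ≠ 0 := by simp [Real.pi_ne_zero]
      exact mul_left_cancel₀ h2πI (by rw [hn]; ring)
    have : γ = n := by exact_mod_cast hγn
    rw [this, Rat.den_intCast]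

end Rat

section ContinuousMapIntegral

variable {X E : Type*} [TopologicalSpace X] [CompactSpace X] [MeasurableSpace X]
  [OpensMeasurableSpace X] [NormedAddCommGroup E] [SecondCountableTopology E] [MeasurableSpace E]
  [BorelSpace E]

lemma ContinuousMap.integrable_of_compactSpace (μ : Measure X) [IsFiniteMeasure μ] (f : C(X, E)) :
    Integrable f μ :=
  (BoundedContinuousFunction.mkOfCompact f).integrable μ

lemma ContinuousMap.lipschitzWith_integral [NormedSpace ℝ E] (μ : Measure X)
    [IsProbabilityMeasure μ] : LipschitzWith 1 fun f : C(X, E) => ∫ x, f x ∂μ := by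
  refine LipschitzWith.of_dist_le_mul fun (f g : C(X, E)) => ?_
  rw [NNReal.coe_one, one_mul, dist_eq_norm, dist_eq_norm, ← integral_sub
    (f.integrable_of_compactSpace μ) (g.integrable_of_compactSpace μ),
    ← BoundedContinuousFunction.norm_mkOfCompact]
  exact BoundedContinuousFunction.norm_integral_le_norm μ (.mkOfCompact (f - g))

end ContinuousMapIntegral

section EmpiricalMeasure

variable {X : Type*} [MeasurableSpace X] [MeasurableSingletonClass X]

noncomputable def empiricalMeasure (z : ℕ → X) (N : ℕ) : Measure X :=
  (N : ℝ≥0∞)⁻¹ • ∑ n ∈ Finset.Icc 1 N, Measure.dirac (z n)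

lemma empiricalMeasure_apply (z : ℕ → X) (N : ℕ) (E : Set X) :
    empiricalMeasure z N E = (N : ℝ≥0∞)⁻¹ * ∑ n ∈ Finset.Icc 1 N, E.indicator 1 (z n) := by
  simp only [empiricalMeasure, Measure.smul_apply, Measure.coe_finsetSum, Finset.sum_apply,
    Measure.dirac_apply, smul_eq_mul]

lemma measureReal_empiricalMeasure (z : ℕ → X) (N : ℕ) (E : Set X) :
    (empiricalMeasure z N).real E = (N : ℝ)⁻¹ * ∑ n ∈ Finset.Icc 1 N, E.indicator 1 (z n) := by
  have hind : ∀ x, (E.indicator (1 : X → ℝ≥0∞) x).toReal = E.indicator 1 x := fun x => by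
    by_cases hx : x ∈ E <;> simp [hx]
  rw [measureReal_def, empiricalMeasure_apply, ENNReal.toReal_mul, ENNReal.toReal_sum]
  · simp [hind]
  · intro n _
    by_cases hn : z n ∈ E <;> simp [hn]

lemma isProbabilityMeasure_empiricalMeasure (z : ℕ → X) {N : ℕ} (hN : N ≠ 0) :
    IsProbabilityMeasure (empiricalMeasure z N) :=
  ⟨by simp [empiricalMeasure_apply, ENNReal.inv_mul_cancel, hN]⟩

lemma integral_empiricalMeasure {E : Type*} [NormedAddCommGroup E] [NormedSpace ℝ E]
    [CompleteSpace E] (z : ℕ → X) (N : ℕ) (f : X → E) :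
    ∫ x, f x ∂empiricalMeasure z N = (N : ℝ)⁻¹ • ∑ n ∈ Finset.Icc 1 N, f (z n) := by
  rw [empiricalMeasure, integral_smul_measure,
    integral_finsetSum_measure fun n _ => integrable_dirac enorm_lt_top]
  simp only [integral_dirac, ENNReal.toReal_inv, ENNReal.toReal_natCast]

end EmpiricalMeasure

namespace AddCircle

variable {T : ℝ} [hT : Fact (0 < T)]

instance nullSingletonClass_haarAddCircle :
    NullSingletonClass (haarAddCircle : Measure (AddCircle T)) where
  measure_singleton x := by
    have h := volume_closedBall T (x := x) 0
    rw [Metric.closedBall_zero, mul_zero, min_eq_right hT.out.le, ENNReal.ofReal_zero,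
      volume_eq_smul_haarAddCircle, Measure.smul_apply, smul_eq_mul, mul_eq_zero] at h
    exact h.resolve_left (by simpa using hT.out)

lemma haarAddCircle_frontier_image_Ico (a b : ℝ) :
    haarAddCircle (frontier (((↑) : ℝ → AddCircle T) '' Ico a b)) = 0 := by
  refine measure_mono_null (fun x hx => ?_)
    (((toFinite {a, b}).image ((↑) : ℝ → AddCircle T)).measure_zero _)
  have hclosure : closure (((↑) : ℝ → AddCircle T) '' Ico a b) ⊆ (↑) '' Icc a b :=
    closure_minimal (image_mono Ico_subset_Icc_self)
      (isCompact_Icc.image (f := ((↑) : ℝ → AddCircle T)) continuous_quotient_mk').isClosed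
  have hinterior : ((↑) : ℝ → AddCircle T) '' Ioo a b ⊆ interior ((↑) '' Ico a b) :=
    interior_maximal (image_mono Ioo_subset_Ico_self) (QuotientAddGroup.isOpenMap_coe _ isOpen_Ioo)
  obtain ⟨t, ⟨hat, htb⟩, rfl⟩ := hclosure hx.1
  have ht : t ∉ Ioo a b := fun ht => hx.2 (hinterior (mem_image_of_mem _ ht))
  refine mem_image_of_mem _ ?_
  rcases hat.eq_or_lt with rfl | hat
  · exact Or.inl rfl
  · exact Or.inr (htb.eq_or_lt.resolve_right fun hb => ht ⟨hat, hb⟩)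

lemma haarAddCircle_image_Ico (a b : ℝ) :
    haarAddCircle (((↑) : ℝ → AddCircle T) '' Ico a b) =
      haarAddCircle (((↑) : ℝ → AddCircle T) '' Ico 0 (b - a)) := by
  have hIco : Ico a b = (a + ·) '' Ico 0 (b - a) := by
    rw [image_const_add_Ico, add_zero, add_sub_cancel]
  rw [hIco, image_image]
  simp_rw [coe_add]
  rw [← image_image (fun x : AddCircle T => (a : AddCircle T) + x), image_add_left,
    measure_preimage_add]

def WeylEquidistributed (z : ℕ → AddCircle T) : Prop :=
  ∀ k : ℤ, k ≠ 0 → Tendsto (fun N : ℕ => (N : ℂ)⁻¹ * ∑ n ∈ Finset.Icc 1 N, fourier k (z n))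
    atTop (𝓝 0)

lemma integral_fourier_haarAddCircle_eq_zero {k : ℤ} (hk : k ≠ 0) :
    ∫ x, fourier k x ∂(haarAddCircle : Measure (AddCircle T)) = 0 :=
  integral_eq_zero_of_add_right_eq_neg (fourier_add_half_inv_index hk hT.out)

theorem tendsto_haarAddCircle_of_tendsto_integral_fourier {ι : Type*} {l : Filter ι}
    {ν : ι → ProbabilityMeasure (AddCircle T)}
    (h : ∀ k : ℤ, k ≠ 0 →
      Tendsto (fun i => ∫ x, fourier k x ∂(ν i : Measure (AddCircle T))) l (𝓝 0)) :
    Tendsto ν l (𝓝 (⟨haarAddCircle, inferInstance⟩ : ProbabilityMeasure (AddCircle T))) := by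
  let good : Submodule ℂ C(AddCircle T, ℂ) :=
    { carrier := {f | Tendsto (fun i => ∫ x, f x ∂(ν i : Measure (AddCircle T))) l
        (𝓝 (∫ x, f x ∂haarAddCircle))}
      add_mem' := fun {f g} hf hg => by
        simpa only [mem_ofPred_eq, ContinuousMap.add_apply, integral_add
          (f.integrable_of_compactSpace _) (g.integrable_of_compactSpace _)] using hf.add hg
      zero_mem' := by simpa using tendsto_const_nhds
      smul_mem' := fun c f hf => by
        simpa only [mem_ofPred_eq, ContinuousMap.smul_apply, integral_smul] using hf.const_smul c }
  have hclosed : IsClosed (good : Set C(AddCircle T, ℂ)) :=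
    (LipschitzWith.uniformEquicontinuous _ 1 fun i => ContinuousMap.lipschitzWith_integral
      (ν i : Measure (AddCircle T))).equicontinuous.isClosed_setOfPred_tendsto
      (ContinuousMap.lipschitzWith_integral _).continuous
  have hfourier : range fourier ⊆ (good : Set C(AddCircle T, ℂ)) := by
    rintro _ ⟨k, rfl⟩
    rcases eq_or_ne k 0 with rfl | hk
    · simpa [good] using tendsto_const_nhds
    · change Tendsto _ _ _
      rw [integral_fourier_haarAddCircle_eq_zero hk]
      exact h k hk
  have hgood : good = ⊤ := by
    rw [eq_top_iff, ← span_fourier_closure_eq_top]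
    exact Submodule.topologicalClosure_minimal _ (Submodule.span_le.mpr hfourier) hclosed
  refine (ProbabilityMeasure.tendsto_iff_forall_integral_rclike_tendsto ℂ).mpr fun f => ?_
  exact (hgood ▸ Submodule.mem_top : f.toContinuousMap ∈ good)

theorem WeylEquidistributed.tendsto_measureReal_empiricalMeasure {z : ℕ → AddCircle T}
    (hz : WeylEquidistributed z) {E : Set (AddCircle T)} (hE : haarAddCircle (frontier E) = 0) :
    Tendsto (fun N => (empiricalMeasure z N).real E) atTop (𝓝 (haarAddCircle.real E)) := by
  -- `empiricalMeasure z 0 = 0`, hence the shift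
  let ν : ℕ → ProbabilityMeasure (AddCircle T) := fun N =>
    ⟨empiricalMeasure z (N + 1), isProbabilityMeasure_empiricalMeasure z N.succ_ne_zero⟩
  have hν : Tendsto ν atTop (𝓝 ⟨haarAddCircle, inferInstance⟩) := by
    refine tendsto_haarAddCircle_of_tendsto_integral_fourier fun k hk => ?_
    simpa [ν, integral_empiricalMeasure, Complex.real_smul] using
      (tendsto_add_atTop_iff_nat 1).mpr (hz k hk)
  rw [← tendsto_add_atTop_iff_nat 1]
  exact (ENNReal.tendsto_toReal (measure_ne_top _ _)).comp
    (ProbabilityMeasure.tendsto_measure_of_null_frontier_of_tendsto' hν hE)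

end AddCircle

namespace UnitAddCircle

lemma weylEquidistributed_coe_iff {x : ℕ → ℝ} :
    WeylEquidistributed (fun n => (x n : UnitAddCircle)) ↔
      ∀ k : ℤ, k ≠ 0 → Tendsto (fun N : ℕ => (N : ℂ)⁻¹ * ∑ n ∈ Finset.Icc 1 N,
        Complex.exp (2 * Real.pi * Complex.I * (k : ℂ) * (x n : ℂ))) atTop (𝓝 0) := by
  simp only [WeylEquidistributed, fourier_coe_apply, Complex.ofReal_one, div_one]

def arc (q j : ℕ) : Set UnitAddCircle :=
  (↑) '' Ico ((j : ℝ) / q) ((j + 1) / q)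

lemma haarAddCircle_frontier_arc (q j : ℕ) : haarAddCircle (frontier (arc q j)) = 0 :=
  haarAddCircle_frontier_image_Ico _ _

lemma haarAddCircle_arc (q j : ℕ) :
    haarAddCircle (arc q j) = haarAddCircle (((↑) : ℝ → UnitAddCircle) '' Ico 0 (1 / q)) := by
  rw [arc, haarAddCircle_image_Ico]
  congr 3
  ring

lemma coe_div_mem_arc_iff {q : ℕ} (hq : 0 < q) (x : ℝ) {j : ℕ} (hj : j < q) :
    ((x / q : ℝ) : UnitAddCircle) ∈ arc q j ↔ ⌊x⌋ % q = j := by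
  have hq' : (0 : ℝ) < q := Nat.cast_pos.mpr hq
  constructor
  · rintro ⟨t, ⟨ht₁, ht₂⟩, ht⟩
    obtain ⟨m, hm⟩ := AddSubgroup.mem_zmultiples_iff.mp (QuotientAddGroup.eq.mp ht)
    have hx : x = (t + m) * q := by
      rw [zsmul_one] at hm
      rw [← div_eq_iff hq'.ne']
      linarith
    have hfloor : ⌊x⌋ = j + q * m := by
      rw [Int.floor_eq_iff]
      have h₁ := (div_le_iff₀ hq').mp ht₁
      have h₂ := (lt_div_iff₀ hq').mp ht₂
      push_cast
      constructor <;> nlinarith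
    rw [hfloor, Int.add_mul_emod_self_left, Int.emod_eq_of_lt (by positivity) (by exact_mod_cast hj)]
  · intro h
    have hdecomp : (⌊x⌋ : ℝ) = j + q * (⌊x⌋ / q : ℤ) := by
      have := Int.emod_add_mul_ediv ⌊x⌋ q
      rw [h] at this
      exact_mod_cast this.symm
    refine ⟨x / q - (⌊x⌋ / q : ℤ), ⟨?_, ?_⟩, ?_⟩
    · rw [div_le_iff₀ hq', sub_mul, div_mul_cancel₀ _ hq'.ne']
      linarith [Int.floor_le x]
    · rw [lt_div_iff₀ hq', sub_mul, div_mul_cancel₀ _ hq'.ne']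
      linarith [Int.lt_floor_add_one x]
    · rw [coe_sub, sub_eq_self]
      exact (AddCircle.coe_eq_zero_iff 1).mpr ⟨_, zsmul_one _⟩

lemma cexp_floor_eq_sum_arc_indicator (γ : ℚ) (x : ℝ) :
    Complex.exp (2 * Real.pi * Complex.I * ((γ : ℝ) : ℂ) * (⌊x⌋ : ℂ)) =
      ∑ j ∈ Finset.range γ.den, Complex.exp (2 * Real.pi * Complex.I * ((γ : ℝ) : ℂ) * (j : ℂ)) *
        ((arc γ.den j).indicator 1 ((x / γ.den : ℝ) : UnitAddCircle) : ℝ) := by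
  obtain ⟨r, hr⟩ := Int.eq_ofNat_of_zero_le (Int.emod_nonneg ⌊x⌋ (Int.natCast_ne_zero.mpr γ.den_nz))
  have hrq : r < γ.den := by
    have := Int.emod_lt_of_pos ⌊x⌋ (Int.natCast_pos.mpr γ.pos)
    omega
  rw [Finset.sum_eq_single_of_mem r (Finset.mem_range.mpr hrq),
    indicator_of_mem ((coe_div_mem_arc_iff γ.pos x hrq).mpr hr), γ.cexp_mul_intCast_emod_den, hr]
  · simp
  · intro j hj hjr
    rw [indicator_of_notMem fun hmem => hjr ?_]
    · simp
    · have := (coe_div_mem_arc_iff γ.pos x (Finset.mem_range.mp hj)).mp hmem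
      omega

lemma average_cexp_floor_eq_sum_empiricalMeasure_arc (γ : ℚ) (a : ℕ → ℝ) (N : ℕ) :
    (N : ℂ)⁻¹ * ∑ n ∈ Finset.Icc 1 N,
        Complex.exp (2 * Real.pi * Complex.I * ((γ : ℝ) : ℂ) * (⌊a n⌋ : ℂ)) =
      ∑ j ∈ Finset.range γ.den, Complex.exp (2 * Real.pi * Complex.I * ((γ : ℝ) : ℂ) * (j : ℂ)) *
        ((empiricalMeasure (fun n => ((a n / γ.den : ℝ) : UnitAddCircle)) N).real
          (arc γ.den j) : ℂ) := by
  simp_rw [cexp_floor_eq_sum_arc_indicator γ (a _), measureReal_empiricalMeasure]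
  rw [Finset.sum_comm, Finset.mul_sum]
  refine Finset.sum_congr rfl fun j _ => ?_
  push_cast
  rw [Finset.mul_sum, Finset.mul_sum, Finset.mul_sum]
  exact Finset.sum_congr rfl fun n _ => by ring

lemma sum_cexp_mul_haarAddCircle_arc_eq_zero {γ : ℚ} (hγ : γ.den ≠ 1) :
    ∑ j ∈ Finset.range γ.den, Complex.exp (2 * Real.pi * Complex.I * ((γ : ℝ) : ℂ) * (j : ℂ)) *
      ((haarAddCircle.real (arc γ.den j) : ℝ) : ℂ) = 0 := by
  simp_rw [measureReal_def, haarAddCircle_arc, ← Finset.sum_mul,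
    γ.sum_range_den_cexp_eq_zero hγ, zero_mul]

end UnitAddCircle

/-- If `(a(n)/m mod 1)ₙ` is equidistributed in `ℝ/ℤ` (in the sense of Weyl) for every
integer `m ≥ 2`, then for every rational `γ ∈ ℚ ∖ ℤ`,
`(1/N) ∑_{n=1}^N e^{2πi γ ⌊a(n)⌋} → 0`. -/
theorem stmt8 (a : ℕ → ℝ)
    (hud : ∀ m : ℕ, 2 ≤ m → ∀ k : ℤ, k ≠ 0 →
      Tendsto (fun N : ℕ => (N : ℂ)⁻¹ * ∑ n ∈ Finset.Icc 1 N,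
        Complex.exp (2 * Real.pi * Complex.I * (k : ℂ) * ((a n / m : ℝ) : ℂ)))
        atTop (nhds 0)) :
    ∀ γ : ℚ, γ.den ≠ 1 →
      Tendsto (fun N : ℕ => (N : ℂ)⁻¹ * ∑ n ∈ Finset.Icc 1 N,
        Complex.exp (2 * Real.pi * Complex.I * ((γ : ℝ) : ℂ) * (⌊a n⌋ : ℂ)))
        atTop (nhds 0) := by
  intro γ hγ
  have hz : WeylEquidistributed (fun n => ((a n / γ.den : ℝ) : UnitAddCircle)) :=
    UnitAddCircle.weylEquidistributed_coe_iff.mpr (hud γ.den (by have := γ.pos; omega))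
  have hlim := tendsto_finsetSum (Finset.range γ.den) fun j _ =>
    (hz.tendsto_measureReal_empiricalMeasure
      (UnitAddCircle.haarAddCircle_frontier_arc γ.den j)).ofReal.const_mul
      (Complex.exp (2 * Real.pi * Complex.I * ((γ : ℝ) : ℂ) * (j : ℂ)))
  rw [UnitAddCircle.sum_cexp_mul_haarAddCircle_arc_eq_zero hγ] at hlim
  exact hlim.congr fun N =>
    (UnitAddCircle.average_cexp_floor_eq_sum_empiricalMeasure_arc γ a N).symm
end

section
/- Let g : ℝ → ℝ be C¹ on a half-line with g' tending monotonically to 0 and x·|g'(x)| → ∞ (a Fejér function), and suppose g is eventually positive and increasing to infinity. Define φ(n) = #{m ∈ ℕ : ⌊g(m)⌋ = n} and Φ(n) = ∑_{k=0}^n φ(k). Then lim_{n→∞} φ(n) = ∞ and lim_{n→∞} φ(n)/Φ(n) = 0. -/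
/-!
Write `A(t)` (`countBelow`) for the number of `m : ℕ` with `g m < t`. Since `⌊g m⌋ = n` means
`n ≤ g m < n + 1`, `φ n = A(n + 1) - A(n)` and `Φ n = A(n + 1) - A(0)`. As `g` is eventually
increasing, `{m | g m < t} = [0, A(t))` for large `t`, so `A(n)` is the first index at which `g`
reaches `n`. Since `g' → 0`, `g` gains less than `1` over any fixed number `K` of steps far out,
whence `φ n ≥ K`. Since `g' ↓`, the mean value theorem gives `(m' - m) g'(m') ≤ g m' - g m`, and
`m' g'(m') → ∞` then says that a gain of less than `1` ending at `m'` takes `o(m')` steps,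
while `Φ n` is of the order of the index `A(n + 1)` at which the level set ends.
-/

open Filter Set

namespace Fejer

section Counting

variable {u : ℕ → ℝ}

noncomputable def countBelow (u : ℕ → ℝ) (t : ℝ) : ℕ := {m | u m < t}.ncard

theorem finite_setOf_lt (hu : Tendsto u atTop atTop) (t : ℝ) : {m | u m < t}.Finite := by
  obtain ⟨N, hN⟩ := eventually_atTop.1 (hu.eventually_ge_atTop t)
  exact (finite_Iio N).subset fun m hm => not_le.1 fun h => (not_le.2 hm) (hN m h)

theorem countBelow_mono (hu : Tendsto u atTop atTop) : Monotone (countBelow u) :=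
  fun _ _ hst => ncard_le_ncard (fun _ hm => lt_of_lt_of_le hm hst) (finite_setOf_lt hu _)

theorem setOf_floor_eq (n : ℕ) :
    {m | ⌊u m⌋ = n} = {m | u m < (n : ℝ) + 1} \ {m | u m < n} := by
  ext m
  simp [Int.floor_eq_iff, and_comm]

theorem ncard_floor_eq (hu : Tendsto u atTop atTop) (n : ℕ) :
    {m | ⌊u m⌋ = n}.ncard = countBelow u (n + 1 : ℕ) - countBelow u n := by
  have hsub : {m | u m < n} ⊆ {m | u m < (n : ℝ) + 1} :=
    fun m (hm : u m < n) => show u m < n + 1 by linarith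
  rw [setOf_floor_eq, ncard_sdiff hsub (finite_setOf_lt hu _), Nat.cast_succ, countBelow,
    countBelow]

theorem sum_ncard_floor_eq (hu : Tendsto u atTop atTop) (n : ℕ) :
    ∑ k ∈ Finset.range (n + 1), {m | ⌊u m⌋ = k}.ncard =
      countBelow u (n + 1 : ℕ) - countBelow u 0 := by
  simp_rw [ncard_floor_eq hu]
  exact_mod_cast Finset.sum_range_tsub (f := fun k : ℕ => countBelow u k)
    (fun _ _ h => countBelow_mono hu (Nat.cast_le.2 h)) (n + 1)

theorem eventually_setOf_lt_eq_Iio (hu : Tendsto u atTop atTop)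
    (hmono : ∃ N, MonotoneOn u (Ici N)) :
    ∀ᶠ t in atTop, {m | u m < t} = Iio (countBelow u t) := by
  obtain ⟨N, hN⟩ := hmono
  have hsmall : ∀ᶠ t in atTop, ∀ m ∈ Finset.range (N + 1), u m < t :=
    (Finset.range (N + 1)).eventually_all.2 fun m _ => eventually_gt_atTop (u m)
  filter_upwards [hsmall] with t ht
  classical
  have hex : ∃ m, t ≤ u m := (hu.eventually_ge_atTop t).exists
  have hIio : {m | u m < t} = Iio (Nat.find hex) := by
    have hNle : N ≤ Nat.find hex := by
      by_contra! h
      exact (not_le.2 (ht _ (Finset.mem_range.2 (by omega)))) (Nat.find_spec hex)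
    ext m
    refine ⟨fun hm => ?_, fun hm => lt_of_not_ge (Nat.find_min hex hm)⟩
    by_contra hfind
    have h : Nat.find hex ≤ m := not_lt.1 hfind
    exact (not_le.2 hm) ((Nat.find_spec hex).trans (hN hNle (hNle.trans h) h))
  rw [countBelow, hIio, ncard_Iio_nat]

theorem tendsto_countBelow_atTop (hu : Tendsto u atTop atTop)
    (hmono : ∃ N, MonotoneOn u (Ici N)) : Tendsto (countBelow u) atTop atTop := by
  refine tendsto_atTop.2 fun M => ?_
  filter_upwards [eventually_setOf_lt_eq_Iio hu hmono, eventually_gt_atTop (u M)] with t ht hM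
  have : M ∈ {m | u m < t} := hM
  rw [ht] at this
  exact this.le

theorem tendsto_ncard_floor_eq_atTop (hu : Tendsto u atTop atTop)
    (hmono : ∃ N, MonotoneOn u (Ici N)) (hslow : ∀ K : ℕ, ∀ᶠ m in atTop, u (m + K) - u m < 1) :
    Tendsto (fun n : ℕ => {m | ⌊u m⌋ = n}.ncard) atTop atTop := by
  refine tendsto_atTop.2 fun K => ?_
  obtain ⟨N, hN⟩ := eventually_atTop.1 (hslow K)
  have hIio := eventually_setOf_lt_eq_Iio hu hmono
  filter_upwards [tendsto_natCast_atTop_atTop.eventually hIio,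
    (tendsto_natCast_atTop_atTop.comp (tendsto_add_atTop_nat 1)).eventually hIio,
    (tendsto_natCast_atTop_atTop.eventually
      ((tendsto_countBelow_atTop hu hmono).eventually_ge_atTop (N + 1)))] with n hn hn' hlarge
  simp only [Function.comp_apply] at hn' hlarge
  rw [ncard_floor_eq hu]
  obtain ⟨p, hp⟩ : ∃ p, countBelow u n = p + 1 := ⟨countBelow u n - 1, by omega⟩
  have hpn : u p < n := by
    have : p ∈ Iio (countBelow u n) := by rw [hp]; exact Nat.lt_succ_self p
    rwa [← hn] at this
  have hpK : p + K ∈ {m | u m < ((n + 1 : ℕ) : ℝ)} := by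
    show u (p + K) < ((n + 1 : ℕ) : ℝ)
    push_cast
    linarith [hN p (by omega)]
  rw [hn', mem_Iio] at hpK
  omega

theorem tendsto_ncard_floor_eq_div_sum_nhds_zero (hu : Tendsto u atTop atTop)
    (hmono : ∃ N, MonotoneOn u (Ici N))
    (hstep : ∀ ε > 0, ∃ N, ∀ m m' : ℕ, N ≤ m → m ≤ m' → u m' - u m < 1 →
      (m' : ℝ) - m ≤ ε * m') :
    Tendsto (fun n : ℕ => ({m | ⌊u m⌋ = n}.ncard : ℝ) /
      ((∑ k ∈ Finset.range (n + 1), {m | ⌊u m⌋ = k}.ncard : ℕ) : ℝ)) atTop (nhds 0) := by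
  refine tendsto_order.2 ⟨fun a ha => Eventually.of_forall fun n => ha.trans_le (by positivity),
    fun ε hε => ?_⟩
  obtain ⟨N, hN⟩ := hstep (ε / 2) (half_pos hε)
  set c := countBelow u 0
  obtain ⟨R, hR⟩ := exists_nat_gt (2 * (1 + ε * c) / ε)
  have hIio := eventually_setOf_lt_eq_Iio hu hmono
  filter_upwards [tendsto_natCast_atTop_atTop.eventually hIio,
    (tendsto_natCast_atTop_atTop.comp (tendsto_add_atTop_nat 1)).eventually hIio,
    (tendsto_natCast_atTop_atTop.eventually
      ((tendsto_countBelow_atTop hu hmono).eventually_ge_atTop (max N R)))] with n hn hn' hlarge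
  simp only [Function.comp_apply] at hn' hlarge
  rw [ncard_floor_eq hu, sum_ncard_floor_eq hu]
  set a := countBelow u n
  set b := countBelow u (n + 1 : ℕ)
  have hab : a ≤ b := countBelow_mono hu (by push_cast; linarith)
  have hca : c ≤ a := countBelow_mono hu n.cast_nonneg
  rcases hab.eq_or_lt with heq | hlt
  · simpa [heq] using hε
  obtain ⟨m₁, hm₁⟩ : ∃ m₁, b = m₁ + 1 := ⟨b - 1, by omega⟩
  have hu_m₁ : u m₁ < n + 1 := by
    have : m₁ ∈ Iio b := by rw [hm₁]; exact Nat.lt_succ_self m₁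
    rw [← hn'] at this
    exact_mod_cast this
  have hu_a : (n : ℝ) ≤ u a := by
    have : a ∉ Iio a := lt_irrefl a
    rw [← hn] at this
    exact not_lt.1 this
  have hgap : (m₁ : ℝ) - a ≤ ε / 2 * m₁ :=
    hN a m₁ (le_of_max_le_left hlarge) (by omega) (by linarith)
  have hRm₁ : ε * R ≤ ε * m₁ := mul_le_mul_of_nonneg_left
    (by exact_mod_cast (le_of_max_le_right hlarge).trans (by omega)) hε.le
  have hεR : 2 * (1 + ε * c) < ε * R := by rw [div_lt_iff₀ hε] at hR; linarith
  have hcm₁ : (c : ℝ) ≤ m₁ := by exact_mod_cast hca.trans (by omega)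
  rw [hm₁, Nat.cast_sub (by omega), Nat.cast_sub (by omega), Nat.cast_succ,
    div_lt_iff₀ (by linarith)]
  linarith

end Counting

section Derivative

variable {g : ℝ → ℝ} {x₀ : ℝ}

theorem nonneg_of_antitoneOn_of_tendsto_zero {f : ℝ → ℝ} (hanti : AntitoneOn f (Ici x₀))
    (h0 : Tendsto f atTop (nhds 0)) {x : ℝ} (hx : x₀ ≤ x) : 0 ≤ f x :=
  le_of_tendsto h0 (eventually_atTop.2 ⟨x, fun _ hy => hanti hx (hx.trans hy) hy⟩)

theorem sub_le_deriv_mul_sub (hc : ContinuousOn g (Ici x₀)) (hd : DifferentiableOn ℝ g (Ioi x₀))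
    (hanti : AntitoneOn (deriv g) (Ici x₀)) {x y : ℝ} (hx : x₀ ≤ x) (hxy : x ≤ y) :
    g y - g x ≤ deriv g x * (y - x) := by
  refine (convex_Icc x y).image_sub_le_mul_sub_of_deriv_le
    (hc.mono (Icc_subset_Ici_iff hxy |>.2 hx)) ?_ (fun z hz => ?_) x (left_mem_Icc.2 hxy) y
    (right_mem_Icc.2 hxy) hxy <;> rw [interior_Icc] at *
  · exact hd.mono fun z hz => hx.trans_lt hz.1
  · exact hanti hx (hx.trans hz.1.le) hz.1.le

theorem deriv_mul_sub_le_sub (hc : ContinuousOn g (Ici x₀)) (hd : DifferentiableOn ℝ g (Ioi x₀))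
    (hanti : AntitoneOn (deriv g) (Ici x₀)) {x y : ℝ} (hx : x₀ ≤ x) (hxy : x ≤ y) :
    deriv g y * (y - x) ≤ g y - g x := by
  refine (convex_Icc x y).mul_sub_le_image_sub_of_le_deriv
    (hc.mono (Icc_subset_Ici_iff hxy |>.2 hx)) ?_ (fun z hz => ?_) x (left_mem_Icc.2 hxy) y
    (right_mem_Icc.2 hxy) hxy <;> rw [interior_Icc] at *
  · exact hd.mono fun z hz => hx.trans_lt hz.1
  · exact hanti (hx.trans hz.1.le) (hx.trans hxy) hz.2.le

theorem exists_monotoneOn_natCast (hc : ContinuousOn g (Ici x₀))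
    (hd : DifferentiableOn ℝ g (Ioi x₀)) (hanti : AntitoneOn (deriv g) (Ici x₀))
    (h0 : Tendsto (deriv g) atTop (nhds 0)) :
    ∃ N : ℕ, MonotoneOn (fun m : ℕ => g m) (Ici N) := by
  refine ⟨⌈x₀⌉₊, fun a ha b _ hab => ?_⟩
  have hx : x₀ ≤ a := Nat.ceil_le.1 ha
  have hab' : (a : ℝ) ≤ b := Nat.cast_le.2 hab
  have hgain := deriv_mul_sub_le_sub hc hd hanti hx hab'
  have hpos := mul_nonneg (nonneg_of_antitoneOn_of_tendsto_zero hanti h0 (hx.trans hab'))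
    (sub_nonneg.2 hab')
  show g a ≤ g b
  linarith

theorem eventually_sub_lt_one (hc : ContinuousOn g (Ici x₀))
    (hd : DifferentiableOn ℝ g (Ioi x₀)) (hanti : AntitoneOn (deriv g) (Ici x₀))
    (h0 : Tendsto (deriv g) atTop (nhds 0)) (K : ℕ) :
    ∀ᶠ m : ℕ in atTop, g ((m + K : ℕ) : ℝ) - g m < 1 := by
  have hlim : Tendsto (fun x => deriv g x * K) atTop (nhds 0) := by
    simpa using h0.mul_const (K : ℝ)
  have hsmall : ∀ᶠ x in atTop, deriv g x * K < 1 := hlim.eventually_lt_const zero_lt_one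
  filter_upwards [tendsto_natCast_atTop_atTop.eventually (hsmall.and (eventually_ge_atTop x₀))]
    with m ⟨hK, hm⟩
  have hgain := sub_le_deriv_mul_sub hc hd hanti hm (le_add_of_nonneg_right K.cast_nonneg)
  rw [add_sub_cancel_left] at hgain
  push_cast
  linarith

theorem exists_sub_le_mul (hc : ContinuousOn g (Ici x₀))
    (hd : DifferentiableOn ℝ g (Ioi x₀)) (hanti : AntitoneOn (deriv g) (Ici x₀))
    (h0 : Tendsto (deriv g) atTop (nhds 0))
    (hinf : Tendsto (fun x => x * |deriv g x|) atTop atTop) {ε : ℝ}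
    (hε : 0 < ε) : ∃ N : ℕ, ∀ m m' : ℕ, N ≤ m → m ≤ m' → g m' - g m < 1 →
      (m' : ℝ) - m ≤ ε * m' := by
  obtain ⟨Y, hY⟩ := eventually_atTop.1 (hinf.eventually_ge_atTop (1 / ε))
  refine ⟨⌈max x₀ Y⌉₊, fun m m' hm hmm' hlt => ?_⟩
  have hm : max x₀ Y ≤ m := Nat.ceil_le.1 hm
  have hmm' : (m : ℝ) ≤ m' := Nat.cast_le.2 hmm'
  have hx₀ : x₀ ≤ m := le_of_max_le_left hm
  have hgrowth : 1 / ε ≤ m' * deriv g m' := by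
    simpa [abs_of_nonneg (nonneg_of_antitoneOn_of_tendsto_zero hanti h0 (hx₀.trans hmm'))]
      using hY m' ((le_of_max_le_right hm).trans hmm')
  have hgain := deriv_mul_sub_le_sub hc hd hanti hx₀ hmm'
  rw [← div_le_iff₀' hε]
  calc ((m' : ℝ) - m) / ε = (m' - m) * (1 / ε) := by ring
    _ ≤ (m' - m) * (m' * deriv g m') := mul_le_mul_of_nonneg_left hgrowth (sub_nonneg.2 hmm')
    _ = m' * (deriv g m' * (m' - m)) := by ring
    _ ≤ m' * 1 := mul_le_mul_of_nonneg_left (by linarith) (Nat.cast_nonneg _)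
    _ = m' := mul_one _

end Derivative

end Fejer

theorem stmt13_general (g : ℝ → ℝ) (x₀ : ℝ)
    (hg : ContDiffOn ℝ 1 g (Ici x₀))
    (hanti : AntitoneOn (deriv g) (Ici x₀))
    (h0 : Tendsto (deriv g) atTop (nhds 0))
    (hinf : Tendsto (fun x => x * |deriv g x|) atTop atTop)
    (hgi : Tendsto g atTop atTop)
    (φ Φ : ℕ → ℕ)
    (hφ : ∀ n : ℕ, φ n = Set.ncard {m : ℕ | ⌊g (m : ℝ)⌋ = (n : ℤ)})
    (hΦ : ∀ n : ℕ, Φ n = ∑ k ∈ Finset.range (n + 1), φ k) :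
    Tendsto φ atTop atTop ∧
      Tendsto (fun n => (φ n : ℝ) / (Φ n : ℝ)) atTop (nhds 0) := by
  have hc : ContinuousOn g (Ici x₀) := hg.continuousOn
  have hd : DifferentiableOn ℝ g (Ioi x₀) :=
    (hg.differentiableOn one_ne_zero).mono Ioi_subset_Ici_self
  have hu : Tendsto (fun m : ℕ => g m) atTop atTop := hgi.comp tendsto_natCast_atTop_atTop
  have hmono := Fejer.exists_monotoneOn_natCast hc hd hanti h0
  obtain rfl : φ = fun n : ℕ => {m : ℕ | ⌊g (m : ℝ)⌋ = (n : ℤ)}.ncard := funext hφ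
  obtain rfl : Φ = fun n : ℕ =>
      ∑ k ∈ Finset.range (n + 1), {m : ℕ | ⌊g (m : ℝ)⌋ = (k : ℤ)}.ncard := funext hΦ
  exact ⟨Fejer.tendsto_ncard_floor_eq_atTop hu hmono
      (Fejer.eventually_sub_lt_one hc hd hanti h0),
    Fejer.tendsto_ncard_floor_eq_div_sum_nhds_zero hu hmono
      fun ε hε => Fejer.exists_sub_le_mul hc hd hanti h0 hinf hε⟩

/-- (Bergelson–Håland Knutson, Lemmas 2.4 and 2.5) Let `g` be a Fejér function (C¹ on a
half-line, `g'` tending monotonically to `0`, `x |g'(x)| → ∞`) with `g → ∞` and `g`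
eventually strictly increasing. With `φ(n) = #{m ∈ ℕ : ⌊g(m)⌋ = n}` and
`Φ(n) = ∑_{k=0}^n φ(k)`, one has `φ(n) → ∞` and `φ(n)/Φ(n) → 0`. -/
theorem stmt13 (g : ℝ → ℝ) (x₀ : ℝ) (hx₀ : 0 ≤ x₀)
    (hg : ContDiffOn ℝ 1 g (Ici x₀))
    (hanti : AntitoneOn (deriv g) (Ici x₀))
    (h0 : Tendsto (deriv g) atTop (nhds 0))
    (hinf : Tendsto (fun x => x * |deriv g x|) atTop atTop)
    (hgi : Tendsto g atTop atTop)
    (hsm : ∃ x₁, StrictMonoOn g (Ici x₁))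
    (φ Φ : ℕ → ℕ)
    (hφ : ∀ n : ℕ, φ n = Set.ncard {m : ℕ | ⌊g (m : ℝ)⌋ = (n : ℤ)})
    (hΦ : ∀ n : ℕ, Φ n = ∑ k ∈ Finset.range (n + 1), φ k) :
    Tendsto φ atTop atTop ∧
      Tendsto (fun n => (φ n : ℝ) / (Φ n : ℝ)) atTop (nhds 0) :=
  stmt13_general g x₀ hg hanti h0 hinf hgi φ Φ hφ hΦ
end

section
/- Let f, g : ℝ → ℝ with f(x)/g(x) → 1 as x → ∞, g smooth and in the class 𝓡 (all ratios x·g^(j+1)/g^(j) have real limits), g nonvanishing with all derivatives nonvanishing, and suppose f'(x)/g'(x) converges. If additionally lim x·g'(x)/g(x) = α ≠ 0 and lim x·f'(x)/f(x) exists, then lim_{x→∞} x·f'(x)/f(x) = α. -/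
open Filter Set Topology

/-! A function with a nonzero limit has vanishing limiting elasticity: along `x = eᵗ` the
elasticity `x h'/h` is the derivative of `t ↦ log |h (eᵗ)|`, which converges, and by the mean
value theorem a convergent function cannot have a derivative tending to a nonzero limit.
Applied to `h = f/g`, whose elasticity is `x f'/f - x g'/g`, this gives `β - α = 0`. -/

theorem eq_zero_of_tendsto_of_hasDerivAt {v v' : ℝ → ℝ} {L γ : ℝ}
    (hv : ∀ᶠ t in atTop, HasDerivAt v (v' t) t) (hL : Tendsto v atTop (𝓝 L))
    (hγ : Tendsto v' atTop (𝓝 γ)) : γ = 0 := by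
  obtain ⟨T, hT⟩ := eventually_atTop.1 hv
  have hmvt : ∀ t, ∃ ξ, t ≤ ξ ∧ (T ≤ t → v' ξ = v (t + 1) - v t) := by
    intro t
    by_cases ht : T ≤ t
    · obtain ⟨ξ, hξ, hslope⟩ := exists_hasDerivAt_eq_slope v v' (lt_add_one t)
        (fun x hx => (hT x (ht.trans hx.1)).continuousAt.continuousWithinAt)
        (fun x hx => hT x (ht.trans hx.1.le))
      exact ⟨ξ, hξ.1.le, fun _ => by simpa using hslope⟩
    · exact ⟨t, le_rfl, fun h => absurd h ht⟩
  choose ξ hξ using hmvt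
  have hderiv : Tendsto (v' ∘ ξ) atTop (𝓝 γ) :=
    hγ.comp (tendsto_atTop_mono (fun t => (hξ t).1) tendsto_id)
  have hincr : Tendsto (fun t => v (t + 1) - v t) atTop (𝓝 (L - L)) :=
    (hL.comp (tendsto_atTop_add_const_right _ 1 tendsto_id)).sub hL
  rw [sub_self] at hincr
  exact tendsto_nhds_unique
    (hderiv.congr' (eventually_atTop.2 ⟨T, fun t ht => (hξ t).2 ht⟩)) hincr

theorem eq_zero_of_tendsto_mul_deriv_div {h : ℝ → ℝ} {L γ : ℝ}
    (hd : ∀ᶠ x in atTop, DifferentiableAt ℝ h x) (hne : ∀ᶠ x in atTop, h x ≠ 0)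
    (hL : Tendsto h atTop (𝓝 L)) (hL0 : L ≠ 0)
    (hγ : Tendsto (fun x => x * deriv h x / h x) atTop (𝓝 γ)) : γ = 0 := by
  refine eq_zero_of_tendsto_of_hasDerivAt (v := fun t => Real.log (h (Real.exp t)))
    ?_ ((Real.continuousAt_log hL0).tendsto.comp (hL.comp Real.tendsto_exp_atTop))
    (hγ.comp Real.tendsto_exp_atTop)
  filter_upwards [Real.tendsto_exp_atTop.eventually (hd.and hne)] with t ⟨hdt, hnet⟩
  exact ((hdt.hasDerivAt.log hnet).comp t (Real.hasDerivAt_exp t)).congr_deriv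
    (by simp only [Function.comp_apply]; ring)

theorem mul_deriv_div_div_eq_sub {f g : ℝ → ℝ} {x : ℝ} (hf : DifferentiableAt ℝ f x)
    (hg : DifferentiableAt ℝ g x) (hfx : f x ≠ 0) (hgx : g x ≠ 0) :
    x * deriv (fun y => f y / g y) x / (f x / g x) =
      x * deriv f x / f x - x * deriv g x / g x := by
  rw [(hf.hasDerivAt.fun_div hg.hasDerivAt hgx).deriv]
  field_simp

theorem stmt16_general (f g : ℝ → ℝ) (x₀ α β : ℝ)
    (hf : DifferentiableOn ℝ f (Ici x₀)) (hgd : DifferentiableOn ℝ g (Ici x₀))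
    (hfne : ∀ x ∈ Ici x₀, f x ≠ 0) (hgne : ∀ x ∈ Ici x₀, g x ≠ 0)
    (h1 : Tendsto (fun x => f x / g x) atTop (nhds 1))
    (h2 : Tendsto (fun x => x * deriv g x / g x) atTop (nhds α))
    (h4 : Tendsto (fun x => x * deriv f x / f x) atTop (nhds β)) :
    β = α := by
  have hreg : ∀ᶠ x in atTop,
      DifferentiableAt ℝ f x ∧ DifferentiableAt ℝ g x ∧ f x ≠ 0 ∧ g x ≠ 0 :=
    eventually_gt_atTop x₀ |>.mono fun x hx =>
      ⟨hf.differentiableAt (Ici_mem_nhds hx), hgd.differentiableAt (Ici_mem_nhds hx),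
        hfne x hx.le, hgne x hx.le⟩
  have helast : Tendsto (fun x => x * deriv (fun y => f y / g y) x / (f x / g x)) atTop
      (𝓝 (β - α)) :=
    (h4.sub h2).congr' <| hreg.mono fun x ⟨hfx, hgx, hfx0, hgx0⟩ =>
      (mul_deriv_div_div_eq_sub hfx hgx hfx0 hgx0).symm
  exact sub_eq_zero.1 <| eq_zero_of_tendsto_mul_deriv_div
    (hreg.mono fun x ⟨hfx, hgx, _, hgx0⟩ => hfx.div hgx hgx0)
    (hreg.mono fun x ⟨_, _, hfx0, hgx0⟩ => div_ne_zero hfx0 hgx0) h1 one_ne_zero helast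

/-- (III(iv) of the paper, for first derivatives) If `f/g → 1`, `g` nonvanishing with
nonvanishing derivative, `x g'/g → α ≠ 0`, `f'/g'` converges, and `x f'/f → β` exists,
then `β = α`. -/
theorem stmt16 (f g : ℝ → ℝ) (x₀ α β c : ℝ)
    (hf : DifferentiableOn ℝ f (Ici x₀)) (hgd : DifferentiableOn ℝ g (Ici x₀))
    (hfne : ∀ x ∈ Ici x₀, f x ≠ 0) (hgne : ∀ x ∈ Ici x₀, g x ≠ 0)
    (hgdne : ∀ x ∈ Ici x₀, deriv g x ≠ 0)
    (h1 : Tendsto (fun x => f x / g x) atTop (nhds 1))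
    (h2 : Tendsto (fun x => x * deriv g x / g x) atTop (nhds α)) (hα : α ≠ 0)
    (h3 : Tendsto (fun x => deriv f x / deriv g x) atTop (nhds c))
    (h4 : Tendsto (fun x => x * deriv f x / f x) atTop (nhds β)) :
    β = α :=
  stmt16_general f g x₀ α β hf hgd hfne hgne h1 h2 h4
end
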